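/- arXiv:1901.00394 — 6 statements merged into one kernel-verified Lean document; each statement's English description precedes it below -/
import Mathlib

section
/- For every real α > 0 and every complex number s with 0 < Re s < α, the function t ↦ t^{s−1}/(t^α + 1) is absolutely integrable on (0,∞) and ∫₀^∞ t^{s−1}/(t^α + 1) dt = Γ(s/α)·Γ(1 − s/α)/α. -/
open MeasureTheory Set

/-- Key lemma: `∫₀^∞ u^{a-1}/(u+1) du = Γ(a) Γ(1-a)` for `0 < Re a < 1`. -/
lemma hasMellin_aux (a : ℂ) (h0 : 0 < a.re) (h1 : a.re < 1) :
    IntegrableOn (fun u : ℝ => (u : ℂ) ^ (a - 1) / ((u : ℂ) + 1)) (Ioi 0) volume ∧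
      ∫ u in Ioi (0 : ℝ), (u : ℂ) ^ (a - 1) / ((u : ℂ) + 1)
        = Complex.Gamma a * Complex.Gamma (1 - a) := by
  set g : ℝ → ℂ := fun x => (x : ℂ) ^ (a - 1) * ((1 : ℂ) - x) ^ (-a) with hg
  set φ : ℝ → ℝ := fun t => t / (1 + t) with hφ
  set φ' : ℝ → ℝ := fun t => ((1 + t) ^ 2)⁻¹ with hφ'
  have hderiv : ∀ t ∈ Ioi (0 : ℝ), HasDerivWithinAt φ (φ' t) (Ioi 0) t := by
    intro t ht
    have h1t : (1 : ℝ) + t ≠ 0 := by have := mem_Ioi.mp ht; positivity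
    have h := ((hasDerivAt_id t).div ((hasDerivAt_const t (1 : ℝ)).add
      (hasDerivAt_id t)) h1t).hasDerivWithinAt (s := Ioi (0:ℝ))
    simp only [id_eq] at h
    have h2 : HasDerivWithinAt φ ((1 * (1 + t) - t * (0 + 1)) / (1 + t) ^ 2) (Ioi 0) t := h
    convert h2 using 1
    show ((1 + t) ^ 2)⁻¹ = _
    ring
  have hinj : InjOn φ (Ioi 0) := by
    intro x hx y hy h
    have hx0 := mem_Ioi.mp hx
    have hy0 := mem_Ioi.mp hy
    have hx1 : (1 : ℝ) + x ≠ 0 := by positivity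
    have hy1 : (1 : ℝ) + y ≠ 0 := by positivity
    simp only [hφ] at h
    field_simp at h
    nlinarith [h]
  have himg : φ '' Ioi 0 = Ioo 0 1 := by
    ext x
    constructor
    · rintro ⟨t, ht, rfl⟩
      have ht0 := mem_Ioi.mp ht
      constructor
      · positivity
      · rw [div_lt_one (by positivity)]; linarith
    · rintro ⟨hx0, hx1⟩
      refine ⟨x / (1 - x), ?_, ?_⟩
      · have : (0:ℝ) < 1 - x := by linarith
        exact mem_Ioi.mpr (by positivity)
      · have h1x : (1 : ℝ) - x ≠ 0 := by linarith
        simp only [hφ]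
        field_simp
        ring
  have heq : ∀ t ∈ Ioi (0 : ℝ), |φ' t| • g (φ t) = (t : ℂ) ^ (a - 1) / ((t : ℂ) + 1) := by
    intro t ht
    have ht0 := mem_Ioi.mp ht
    have h1t : (0 : ℝ) < 1 + t := by linarith
    set z : ℂ := ((1 + t : ℝ) : ℂ) with hz
    have hz0 : z ≠ 0 := by
      simp only [hz, ne_eq, Complex.ofReal_eq_zero]; positivity
    have hzarg : z.arg ≠ Real.pi := by
      rw [hz, Complex.arg_ofReal_of_nonneg h1t.le]
      exact (Real.pi_ne_zero).symm
    have habs : |φ' t| = ((1 + t) ^ 2)⁻¹ := abs_of_pos (by positivity)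
    have hphit : φ t = t * (1 + t)⁻¹ := div_eq_mul_inv _ _
    have key1 : ((φ t : ℝ) : ℂ) ^ (a - 1) = (t : ℂ) ^ (a - 1) * (z ^ (a - 1))⁻¹ := by
      rw [hphit, Complex.ofReal_mul, Complex.mul_cpow_ofReal_nonneg ht0.le (by positivity),
        Complex.ofReal_inv, Complex.inv_cpow _ _ hzarg]
    have key2 : ((1 : ℂ) - ((φ t : ℝ) : ℂ)) ^ (-a) = (z ^ (-a))⁻¹ := by
      have : (1 : ℂ) - ((φ t : ℝ) : ℂ) = z⁻¹ := by
        have hr : (1 : ℝ) - φ t = (1 + t)⁻¹ := by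
          simp only [hφ]; field_simp; ring
        rw [hz, ← Complex.ofReal_inv, ← hr]
        push_cast; ring
      rw [this, Complex.inv_cpow _ _ hzarg]
    have hcomb : z ^ (a - 1) * z ^ (-a) = z⁻¹ := by
      rw [← Complex.cpow_add _ _ hz0, show a - 1 + -a = -1 by ring, Complex.cpow_neg_one]
    have hzt : (t : ℂ) + 1 = z := by rw [hz]; push_cast; ring
    calc |φ' t| • g (φ t)
        = (((1 + t) ^ 2)⁻¹ : ℝ) • ((t : ℂ) ^ (a - 1) * (z ^ (a - 1))⁻¹ * (z ^ (-a))⁻¹) := by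
          rw [habs, hg]; simp only [key1, key2]
      _ = ((z ^ 2)⁻¹) * ((t : ℂ) ^ (a - 1) * (z ^ (a - 1) * z ^ (-a))⁻¹) := by
          rw [Complex.real_smul,
            show ((((1 + t) ^ 2)⁻¹ : ℝ) : ℂ) = (z ^ 2)⁻¹ by rw [hz]; push_cast; ring,
            mul_inv]
          ring
      _ = ((z ^ 2)⁻¹) * ((t : ℂ) ^ (a - 1) * z) := by rw [hcomb, inv_inv]
      _ = (t : ℂ) ^ (a - 1) / ((t : ℂ) + 1) := by
          rw [hzt]; field_simp
  have hbeta : IntegrableOn g (Ioo 0 1) volume := by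
    have := Complex.betaIntegral_convergent h0 (by simp [Complex.sub_re]; linarith : 0 < (1 - a).re)
    rw [intervalIntegrable_iff_integrableOn_Ioc_of_le (by norm_num : (0:ℝ) ≤ 1)] at this
    have h2 : IntegrableOn (fun x : ℝ => (x : ℂ) ^ (a - 1) * ((1 : ℂ) - x) ^ (1 - a - 1))
        (Ioc 0 1) volume := this
    have h3 : (1 : ℂ) - a - 1 = -a := by ring
    rw [h3] at h2
    exact h2.mono_set Ioo_subset_Ioc_self
  have hbeta' : IntegrableOn g (φ '' Ioi 0) volume := by rw [himg]; exact hbeta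
  have hint : IntegrableOn (fun t : ℝ => (t : ℂ) ^ (a - 1) / ((t : ℂ) + 1)) (Ioi 0) volume := by
    have := (integrableOn_image_iff_integrableOn_abs_deriv_smul measurableSet_Ioi
      hderiv hinj g).mp hbeta'
    exact this.congr_fun heq measurableSet_Ioi
  refine ⟨hint, ?_⟩
  have hchg : ∫ x in φ '' Ioi 0, g x
      = ∫ t in Ioi (0 : ℝ), |φ' t| • g (φ t) :=
    integral_image_eq_integral_abs_deriv_smul measurableSet_Ioi hderiv hinj g
  have hval : ∫ t in Ioi (0 : ℝ), (t : ℂ) ^ (a - 1) / ((t : ℂ) + 1)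
      = ∫ x in Ioo (0 : ℝ) 1, g x := by
    rw [← himg, hchg]
    exact (setIntegral_congr_fun measurableSet_Ioi heq).symm
  rw [hval]
  have hbval : Complex.betaIntegral a (1 - a) = ∫ x in Ioo (0 : ℝ) 1, g x := by
    rw [Complex.betaIntegral, intervalIntegral.integral_of_le (by norm_num : (0:ℝ) ≤ 1),
      ← integral_Ioc_eq_integral_Ioo]
    congr 1
    ext x
    rw [hg, show (1 : ℂ) - a - 1 = -a by ring]
  rw [← hbval]
  have hG := Complex.Gamma_mul_Gamma_eq_betaIntegral h0
    (by simp [Complex.sub_re]; linarith : 0 < (1 - a).re)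
  rw [show a + (1 - a) = 1 by ring, Complex.Gamma_one, one_mul] at hG
  exact hG.symm

/-- Example 2.1, equation (4): the Mellin transform of `t ↦ 1/(t^α + 1)` at `s`
with `0 < Re s < α` equals `Γ(s/α) Γ(1 - s/α) / α`. -/
theorem mellin_one_div_rpow_add_one
    (α : ℝ) (hα : 0 < α) (s : ℂ) (hs0 : 0 < s.re) (hsα : s.re < α) :
    IntegrableOn (fun t : ℝ => (t : ℂ) ^ (s - 1) / ((t : ℂ) ^ (α : ℂ) + 1)) (Ioi 0) volume ∧
      ∫ t in Ioi (0 : ℝ), (t : ℂ) ^ (s - 1) / ((t : ℂ) ^ (α : ℂ) + 1)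
        = Complex.Gamma (s / α) * Complex.Gamma (1 - s / α) / (α : ℂ) := by
  have hre : (s / (α : ℂ)).re = s.re / α := Complex.div_ofReal_re s α
  have h0 : 0 < (s / (α : ℂ)).re := by rw [hre]; positivity
  have h1 : (s / (α : ℂ)).re < 1 := by rw [hre]; rw [div_lt_one hα]; exact hsα
  obtain ⟨hint, hval⟩ := hasMellin_aux (s / (α : ℂ)) h0 h1
  set f : ℝ → ℂ := fun u => ((u : ℂ) + 1)⁻¹ with hf
  have hcong : ∀ t ∈ Ioi (0 : ℝ),
      (t : ℂ) ^ (s - 1) / ((t : ℂ) ^ (α : ℂ) + 1) = (t : ℂ) ^ (s - 1) • f (t ^ α) := by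
    intro t ht
    rw [hf]
    simp only [smul_eq_mul]
    rw [Complex.ofReal_cpow (le_of_lt (mem_Ioi.mp ht)), div_eq_mul_inv]
  have hmc' : MellinConvergent f (s / (α : ℂ)) := by
    refine hint.congr_fun (fun u hu => ?_) measurableSet_Ioi
    rw [hf]; simp only [smul_eq_mul, div_eq_mul_inv]
  have hmc : MellinConvergent (fun t => f (t ^ α)) s :=
    (MellinConvergent.comp_rpow (ne_of_gt hα)).mpr hmc'
  constructor
  · exact hmc.congr_fun (fun t ht => (hcong t ht).symm) measurableSet_Ioi
  · have hmval : mellin f (s / (α : ℂ)) = Complex.Gamma (s / α) * Complex.Gamma (1 - s / α) := by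
      rw [mellin, ← hval]
      refine setIntegral_congr_fun measurableSet_Ioi (fun u hu => ?_)
      rw [hf]; simp only [smul_eq_mul, div_eq_mul_inv]
    calc ∫ t in Ioi (0 : ℝ), (t : ℂ) ^ (s - 1) / ((t : ℂ) ^ (α : ℂ) + 1)
        = mellin (fun t => f (t ^ α)) s := setIntegral_congr_fun measurableSet_Ioi hcong
      _ = |α|⁻¹ • mellin f (s / α) := mellin_comp_rpow f s α
      _ = Complex.Gamma (s / α) * Complex.Gamma (1 - s / α) / (α : ℂ) := by
          rw [hmval, abs_of_pos hα, Complex.real_smul, Complex.ofReal_inv, div_eq_mul_inv]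
          ring
end

section
/- Let n ≥ 1 be an integer, α ∈ (0,1), β > n reals, t > 0 and C > 0. Let K : ℝⁿ → ℂ be measurable and suppose |K(x)| ≤ C·t^{−αn/β} for almost every x with |x| ≤ t^{α/β}, and |K(x)| ≤ C·t^{α}·|x|^{−n−β} for almost every x with |x| ≥ t^{α/β}. Then for every s ∈ [1,∞] there is a constant C′ depending only on n, α, β, s such that ‖K‖_{L^s(ℝⁿ)} ≤ C·C′·t^{−(αn/β)(1−1/s)}. -/
open MeasureTheory Set ENNReal Metric

private lemma tail_finite_aux (n : ℕ) (β : ℝ) (hβ : (n : ℝ) < β) :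
    ∫⁻ x : EuclideanSpace ℝ (Fin n),
      ((closedBall (0 : EuclideanSpace ℝ (Fin n)) 1)ᶜ).indicator
        (fun x => ENNReal.ofReal (‖x‖ ^ (-(n : ℝ) - β))) x ∂volume < ⊤ := by
  have hβ0 : 0 < β := lt_of_le_of_lt (Nat.cast_nonneg n) hβ
  have hq : (0 : ℝ) < (n : ℝ) + β := by positivity
  have hpt : ∀ x : EuclideanSpace ℝ (Fin n),
      ((closedBall (0 : EuclideanSpace ℝ (Fin n)) 1)ᶜ).indicator
        (fun x => ENNReal.ofReal (‖x‖ ^ (-(n : ℝ) - β))) x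
      ≤ ENNReal.ofReal (2 ^ ((n : ℝ) + β)) * ENNReal.ofReal ((1 + ‖x‖) ^ (-((n : ℝ) + β))) := by
    intro x
    by_cases hx : x ∈ (closedBall (0 : EuclideanSpace ℝ (Fin n)) 1)ᶜ
    · rw [Set.indicator_of_mem hx]
      have h1x : 1 < ‖x‖ := by
        simpa using lt_of_not_ge (fun h => hx (by simpa [mem_closedBall_zero_iff] using h))
      have hx0 : 0 < ‖x‖ := one_pos.trans h1x
      rw [← ENNReal.ofReal_mul (by positivity)]
      apply ENNReal.ofReal_le_ofReal
      have hnb : -(n : ℝ) - β = -((n : ℝ) + β) := by ring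
      rw [hnb, Real.rpow_neg hx0.le, Real.rpow_neg (by positivity)]
      have h2 : (1 + ‖x‖) ^ ((n : ℝ) + β) ≤ 2 ^ ((n : ℝ) + β) * ‖x‖ ^ ((n : ℝ) + β) := by
        rw [← Real.mul_rpow (by norm_num) hx0.le]
        exact Real.rpow_le_rpow (by positivity) (by linarith) hq.le
      have h3 : 0 < (1 + ‖x‖) ^ ((n : ℝ) + β) := by positivity
      have h4 : 0 < ‖x‖ ^ ((n : ℝ) + β) := by positivity
      have h5 : 0 < (2 : ℝ) ^ ((n : ℝ) + β) := by positivity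
      calc (‖x‖ ^ ((n : ℝ) + β))⁻¹
          = 2 ^ ((n : ℝ) + β) * (2 ^ ((n : ℝ) + β) * ‖x‖ ^ ((n : ℝ) + β))⁻¹ := by
            rw [mul_inv, ← mul_assoc, mul_inv_cancel₀ h5.ne', one_mul]
        _ ≤ 2 ^ ((n : ℝ) + β) * ((1 + ‖x‖) ^ ((n : ℝ) + β))⁻¹ := by gcongr
    · rw [Set.indicator_of_notMem hx]
      exact zero_le
  calc ∫⁻ x : EuclideanSpace ℝ (Fin n),
      ((closedBall (0 : EuclideanSpace ℝ (Fin n)) 1)ᶜ).indicator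
        (fun x => ENNReal.ofReal (‖x‖ ^ (-(n : ℝ) - β))) x ∂volume
      ≤ ∫⁻ x : EuclideanSpace ℝ (Fin n),
          ENNReal.ofReal (2 ^ ((n : ℝ) + β)) *
            ENNReal.ofReal ((1 + ‖x‖) ^ (-((n : ℝ) + β))) ∂volume := lintegral_mono hpt
    _ = ENNReal.ofReal (2 ^ ((n : ℝ) + β)) *
          ∫⁻ x : EuclideanSpace ℝ (Fin n),
            ENNReal.ofReal ((1 + ‖x‖) ^ (-((n : ℝ) + β))) ∂volume :=
        lintegral_const_mul' _ _ ENNReal.ofReal_ne_top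
    _ < ⊤ := by
        apply ENNReal.mul_lt_top ENNReal.ofReal_lt_top
        apply finite_integral_one_add_norm
        simp only [finrank_euclideanSpace, Fintype.card_fin]
        linarith

private lemma tail_scaling (n : ℕ) (β : ℝ) (hβ : (n : ℝ) < β) :
    ∃ J : ℝ≥0∞, J ≠ ⊤ ∧ ∀ r : ℝ, 0 < r →
      ∫⁻ x in (closedBall (0 : EuclideanSpace ℝ (Fin n)) r)ᶜ,
          ENNReal.ofReal (‖x‖ ^ (-(n : ℝ) - β)) ∂volume
        = ENNReal.ofReal (r ^ (-β)) * J := by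
  set E := EuclideanSpace ℝ (Fin n)
  set e : ℝ := -(n : ℝ) - β with he
  set J : ℝ≥0∞ := ∫⁻ x : E,
      ((closedBall (0 : E) 1)ᶜ).indicator (fun x => ENNReal.ofReal (‖x‖ ^ e)) x ∂volume with hJ
  have hJtop : J ≠ ⊤ := (tail_finite_aux n β hβ).ne
  refine ⟨J, hJtop, fun r hr => ?_⟩
  have hdim : Module.finrank ℝ E = n := by
    simp [E, finrank_euclideanSpace]
  set g : E → ℝ≥0∞ :=
    ((closedBall (0 : E) r)ᶜ).indicator (fun x => ENNReal.ofReal (‖x‖ ^ e)) with hg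
  have hmeas : Measurable g := by
    apply Measurable.indicator _ measurableSet_closedBall.compl
    fun_prop
  -- change of variables x = r • y
  have hmap := MeasureTheory.Measure.map_addHaar_smul (volume : Measure E) (r := r) hr.ne'
  have h1 : ∫⁻ y : E, g (r • y) ∂volume
      = ENNReal.ofReal ((r ^ n)⁻¹) * ∫⁻ x : E, g x ∂volume := by
    rw [← lintegral_map hmeas (measurable_const_smul r), hmap, hdim,
      lintegral_smul_measure, abs_of_pos (by positivity), smul_eq_mul]
  have hrn : (0 : ℝ) < r ^ n := by positivity
  have h2 : ∫⁻ x : E, g x ∂volume = ENNReal.ofReal (r ^ n) * ∫⁻ y : E, g (r • y) ∂volume := by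
    rw [h1, ← mul_assoc, ← ENNReal.ofReal_mul hrn.le, mul_inv_cancel₀ hrn.ne', ENNReal.ofReal_one,
      one_mul]
  -- pointwise identity for the rescaled integrand
  have hpt : ∀ y : E, g (r • y) = ENNReal.ofReal (r ^ e) *
      ((closedBall (0 : E) 1)ᶜ).indicator (fun x => ENNReal.ofReal (‖x‖ ^ e)) y := by
    intro y
    have hnorm : ‖r • y‖ = r * ‖y‖ := by
      rw [norm_smul, Real.norm_eq_abs, abs_of_pos hr]
    by_cases hy : ‖y‖ ≤ 1
    · have hmem : r • y ∈ closedBall (0 : E) r := by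
        rw [mem_closedBall_zero_iff, hnorm]
        calc r * ‖y‖ ≤ r * 1 := by
              exact mul_le_mul_of_nonneg_left hy hr.le
          _ = r := mul_one r
      have hmem1 : y ∈ closedBall (0 : E) 1 := by rwa [mem_closedBall_zero_iff]
      rw [hg]
      simp [Set.indicator_of_notMem, hmem, hmem1]
    · have h1y : 1 < ‖y‖ := lt_of_not_ge hy
      have hy0 : 0 < ‖y‖ := one_pos.trans h1y
      have hmem : r • y ∈ (closedBall (0 : E) r)ᶜ := by
        simp only [mem_compl_iff, mem_closedBall_zero_iff, hnorm, not_le]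
        nlinarith
      have hmem1 : y ∈ (closedBall (0 : E) 1)ᶜ := by
        simp only [mem_compl_iff, mem_closedBall_zero_iff, not_le]
        exact h1y
      rw [hg, Set.indicator_of_mem hmem, Set.indicator_of_mem hmem1, hnorm,
        Real.mul_rpow hr.le hy0.le, ENNReal.ofReal_mul (by positivity)]
  have h3 : ∫⁻ y : E, g (r • y) ∂volume = ENNReal.ofReal (r ^ e) * J := by
    rw [hJ]
    simp_rw [hpt]
    exact lintegral_const_mul' _ _ ENNReal.ofReal_ne_top
  have hre : (0 : ℝ) < r ^ e := Real.rpow_pos_of_pos hr e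
  have hcomb : ENNReal.ofReal (r ^ n) * ENNReal.ofReal (r ^ e) = ENNReal.ofReal (r ^ (-β)) := by
    rw [← ENNReal.ofReal_mul hrn.le]
    congr 1
    rw [← Real.rpow_natCast r n, ← Real.rpow_add hr]
    congr 1
    rw [he]; ring
  calc ∫⁻ x in (closedBall (0 : E) r)ᶜ, ENNReal.ofReal (‖x‖ ^ e) ∂volume
      = ∫⁻ x : E, g x ∂volume := by
        rw [hg, lintegral_indicator measurableSet_closedBall.compl]
    _ = ENNReal.ofReal (r ^ n) * (ENNReal.ofReal (r ^ e) * J) := by rw [h2, h3]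
    _ = ENNReal.ofReal (r ^ (-β)) * J := by rw [← mul_assoc, hcomb]

/-- Lemma 3.2(1a): if `β > n` and `K` obeys the pointwise bounds of Lemma 3.1(1)
(with constant `C` and time `t`), then for every `s ∈ [1,∞]` (as an extended real),
`‖K‖_{L^s} ≤ C C' t^{-(αn/β)(1-1/s)}` with `C'` depending only on `n, α, β, s`. -/
theorem Ls_estimate_S_beta_gt_n
    (n : ℕ) (hn : 1 ≤ n) (α β : ℝ) (hα0 : 0 < α) (hα1 : α < 1) (hβ : (n : ℝ) < β)
    (s : ℝ≥0∞) (hs : 1 ≤ s) :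
    ∃ C' : ℝ, 0 < C' ∧
      ∀ (t C : ℝ), 0 < t → 0 < C →
        ∀ K : EuclideanSpace ℝ (Fin n) → ℂ, Measurable K →
          (∀ᵐ x : EuclideanSpace ℝ (Fin n) ∂volume,
            ‖x‖ ≤ t ^ (α / β) → ‖K x‖ ≤ C * t ^ (-(α * n / β))) →
          (∀ᵐ x : EuclideanSpace ℝ (Fin n) ∂volume,
            t ^ (α / β) ≤ ‖x‖ → ‖K x‖ ≤ C * t ^ α * ‖x‖ ^ (-(n : ℝ) - β)) →
          eLpNorm K s volume
            ≤ ENNReal.ofReal (C * C' * t ^ (-(α * n / β) * (1 - (1 / s).toReal))) := by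
  classical
  set E := EuclideanSpace ℝ (Fin n)
  have hβ0 : 0 < β := lt_of_le_of_lt (Nat.cast_nonneg n) hβ
  have hdim : Module.finrank ℝ E = n := by simp [E, finrank_euclideanSpace]
  obtain ⟨J, hJtop, hJ⟩ := tail_scaling n β hβ
  set V : ℝ≥0∞ := volume (ball (0 : E) 1) with hV
  have hVtop : V ≠ ⊤ := measure_ball_lt_top.ne
  set A : ℝ≥0∞ := V + J with hA
  have hAtop : A ≠ ⊤ := by
    rw [hA]; exact ENNReal.add_ne_top.mpr ⟨hVtop, hJtop⟩
  set Amax : ℝ := max A.toReal 1 with hAmax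
  have hAmax1 : (1 : ℝ) ≤ Amax := le_max_right _ _
  have hAmax0 : (0 : ℝ) < Amax := lt_of_lt_of_le one_pos hAmax1
  have hAle : A ≤ ENNReal.ofReal Amax :=
    le_trans (le_of_eq (ENNReal.ofReal_toReal hAtop).symm)
      (ENNReal.ofReal_le_ofReal (le_max_left _ _))
  refine ⟨max (Amax ^ (1 / s.toReal)) 1, lt_of_lt_of_le one_pos (le_max_right _ _), ?_⟩
  intro t C ht hC K hK h1 h2
  set C' : ℝ := max (Amax ^ (1 / s.toReal)) 1 with hC'
  have hC'1 : (1 : ℝ) ≤ C' := le_max_right _ _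
  set r : ℝ := t ^ (α / β) with hrdef
  have hr : 0 < r := Real.rpow_pos_of_pos ht _
  set M : ℝ := C * t ^ (-(α * n / β)) with hM
  have hM0 : 0 < M := by positivity
  -- key exponent computations
  have hkey : C * t ^ α * r ^ (-(n : ℝ) - β) = M := by
    rw [hrdef, ← Real.rpow_mul ht.le, mul_assoc, ← Real.rpow_add ht, hM]
    congr 1
    field_simp
    ring
  -- a.e. sup bound
  have hb : ∀ᵐ x : E ∂volume, ‖K x‖ ≤ M := by
    filter_upwards [h1, h2] with x hx1 hx2
    rcases le_total ‖x‖ r with h | h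
    · exact hx1 h
    · refine (hx2 h).trans ?_
      rw [← hkey]
      have hmono : ‖x‖ ^ (-(n : ℝ) - β) ≤ r ^ (-(n : ℝ) - β) := by
        apply Real.rpow_le_rpow_of_nonpos hr h
        have : (0 : ℝ) ≤ (n : ℝ) := Nat.cast_nonneg n
        linarith
      have hCt : (0 : ℝ) ≤ C * t ^ α := by positivity
      exact mul_le_mul_of_nonneg_left hmono hCt
  have hbe : ∀ᵐ x : E ∂volume, (‖K x‖₊ : ℝ≥0∞) ≤ ENNReal.ofReal M := by
    filter_upwards [hb] with x hx
    rw [← enorm_eq_nnnorm, ← ofReal_norm]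
    exact ENNReal.ofReal_le_ofReal hx
  -- L¹ estimate
  have hL1 : ∫⁻ x : E, (‖K x‖₊ : ℝ≥0∞) ∂volume ≤ ENNReal.ofReal (C * Amax) := by
    have hrn : r ^ n = t ^ (α * n / β) := by
      rw [hrdef, ← Real.rpow_natCast (t ^ (α / β)) n, ← Real.rpow_mul ht.le]
      congr 1
      field_simp
    have hball : ∫⁻ x in closedBall (0 : E) r, (‖K x‖₊ : ℝ≥0∞) ∂volume
        ≤ ENNReal.ofReal C * V := by
      have hae : ∀ᵐ x ∂(volume.restrict (closedBall (0 : E) r)),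
          (‖K x‖₊ : ℝ≥0∞) ≤ ENNReal.ofReal M := by
        filter_upwards [ae_restrict_of_ae h1, ae_restrict_mem measurableSet_closedBall]
          with x hx hxB
        rw [← enorm_eq_nnnorm, ← ofReal_norm]
        exact ENNReal.ofReal_le_ofReal (hx (mem_closedBall_zero_iff.mp hxB))
      calc ∫⁻ x in closedBall (0 : E) r, (‖K x‖₊ : ℝ≥0∞) ∂volume
          ≤ ∫⁻ _x in closedBall (0 : E) r, ENNReal.ofReal M ∂volume := lintegral_mono_ae hae
        _ = ENNReal.ofReal M * volume (closedBall (0 : E) r) := setLIntegral_const _ _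
        _ = ENNReal.ofReal M * (ENNReal.ofReal (r ^ Module.finrank ℝ E) * V) := by
            rw [MeasureTheory.Measure.addHaar_closedBall _ _ hr.le, hV]
        _ = ENNReal.ofReal C * V := by
            rw [← mul_assoc, ← ENNReal.ofReal_mul hM0.le, hdim]
            congr 2
            rw [hM, hrn, mul_assoc, ← Real.rpow_add ht]
            norm_num
    have htail : ∫⁻ x in (closedBall (0 : E) r)ᶜ, (‖K x‖₊ : ℝ≥0∞) ∂volume
        ≤ ENNReal.ofReal C * J := by
      have hae : ∀ᵐ x ∂(volume.restrict (closedBall (0 : E) r)ᶜ),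
          (‖K x‖₊ : ℝ≥0∞) ≤ ENNReal.ofReal (C * t ^ α) * ENNReal.ofReal (‖x‖ ^ (-(n : ℝ) - β)) := by
        filter_upwards [ae_restrict_of_ae h2, ae_restrict_mem measurableSet_closedBall.compl]
          with x hx hxB
        have hxr : r ≤ ‖x‖ := by
          have := (mem_compl_iff _ _).mp hxB
          rw [mem_closedBall_zero_iff] at this
          linarith [lt_of_not_ge this]
        rw [← enorm_eq_nnnorm, ← ofReal_norm, ← ENNReal.ofReal_mul (by positivity)]
        exact ENNReal.ofReal_le_ofReal (hx hxr)
      have hrβ : ENNReal.ofReal (C * t ^ α) * ENNReal.ofReal (r ^ (-β)) = ENNReal.ofReal C := by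
        rw [← ENNReal.ofReal_mul (by positivity)]
        congr 1
        rw [hrdef, ← Real.rpow_mul ht.le, mul_assoc, ← Real.rpow_add ht]
        rw [show α + α / β * -β = 0 by field_simp; ring]
        simp
      calc ∫⁻ x in (closedBall (0 : E) r)ᶜ, (‖K x‖₊ : ℝ≥0∞) ∂volume
          ≤ ∫⁻ x in (closedBall (0 : E) r)ᶜ,
              ENNReal.ofReal (C * t ^ α) * ENNReal.ofReal (‖x‖ ^ (-(n : ℝ) - β)) ∂volume :=
            lintegral_mono_ae hae
        _ = ENNReal.ofReal (C * t ^ α) *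
              ∫⁻ x in (closedBall (0 : E) r)ᶜ, ENNReal.ofReal (‖x‖ ^ (-(n : ℝ) - β)) ∂volume :=
            lintegral_const_mul' _ _ ENNReal.ofReal_ne_top
        _ = ENNReal.ofReal (C * t ^ α) * (ENNReal.ofReal (r ^ (-β)) * J) := by rw [hJ r hr]
        _ = ENNReal.ofReal C * J := by rw [← mul_assoc, hrβ]
    calc ∫⁻ x : E, (‖K x‖₊ : ℝ≥0∞) ∂volume
        = ∫⁻ x in closedBall (0 : E) r, (‖K x‖₊ : ℝ≥0∞) ∂volume
          + ∫⁻ x in (closedBall (0 : E) r)ᶜ, (‖K x‖₊ : ℝ≥0∞) ∂volume :=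
          (lintegral_add_compl _ measurableSet_closedBall).symm
      _ ≤ ENNReal.ofReal C * V + ENNReal.ofReal C * J := add_le_add hball htail
      _ = ENNReal.ofReal C * A := by rw [hA, mul_add]
      _ ≤ ENNReal.ofReal C * ENNReal.ofReal Amax := mul_le_mul_right hAle _
      _ = ENNReal.ofReal (C * Amax) := (ENNReal.ofReal_mul hC.le).symm
  -- now split on s = ⊤
  rcases eq_or_ne s ⊤ with hsT | hsT
  · subst hsT
    rw [eLpNorm_exponent_top]
    refine le_trans (eLpNormEssSup_le_of_ae_bound hb) (ENNReal.ofReal_le_ofReal ?_)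
    have h0 : (1 / (⊤ : ℝ≥0∞)).toReal = 0 := by simp
    rw [h0, hM]
    have htp : 0 < t ^ (-(α * ↑n / β)) := Real.rpow_pos_of_pos ht _
    have he' : -(α * ↑n / β) * (1 - 0) = -(α * ↑n / β) := by ring
    rw [he']
    nlinarith
  · -- finite exponent
    set p : ℝ := s.toReal with hp
    have hs0 : s ≠ 0 := (one_pos.trans_le hs).ne'
    have hp1 : 1 ≤ p := by
      rw [hp, ← ENNReal.toReal_one]
      exact ENNReal.toReal_mono hsT hs
    have hp0 : 0 < p := lt_of_lt_of_le one_pos hp1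
    have hinv : (1 / s).toReal = p⁻¹ := by
      rw [one_div, ENNReal.toReal_inv, hp]
    rw [eLpNorm_eq_lintegral_rpow_enorm_toReal hs0 hsT, ← hp]
    have hptw : ∀ᵐ x : E ∂volume,
        (‖K x‖₊ : ℝ≥0∞) ^ p ≤ ENNReal.ofReal M ^ (p - 1) * (‖K x‖₊ : ℝ≥0∞) := by
      filter_upwards [hbe] with x hx
      rcases eq_or_ne ((‖K x‖₊ : ℝ≥0∞)) 0 with h0 | h0
      · rw [h0, ENNReal.zero_rpow_of_pos hp0]
        exact zero_le
      · have hne : ((‖K x‖₊ : ℝ≥0∞)) ≠ ⊤ := (lt_of_le_of_lt hx ENNReal.ofReal_lt_top).ne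
        calc (‖K x‖₊ : ℝ≥0∞) ^ p = (‖K x‖₊ : ℝ≥0∞) ^ (p - 1) * (‖K x‖₊ : ℝ≥0∞) ^ (1 : ℝ) := by
              rw [← ENNReal.rpow_add _ _ h0 hne]
              norm_num
          _ ≤ ENNReal.ofReal M ^ (p - 1) * (‖K x‖₊ : ℝ≥0∞) := by
              rw [ENNReal.rpow_one]
              exact mul_le_mul_left (ENNReal.rpow_le_rpow hx (by linarith)) _
    have hint : ∫⁻ x : E, (‖K x‖₊ : ℝ≥0∞) ^ p ∂volume
        ≤ ENNReal.ofReal (M ^ (p - 1) * (C * Amax)) := by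
      calc ∫⁻ x : E, (‖K x‖₊ : ℝ≥0∞) ^ p ∂volume
          ≤ ∫⁻ x : E, ENNReal.ofReal M ^ (p - 1) * (‖K x‖₊ : ℝ≥0∞) ∂volume :=
            lintegral_mono_ae hptw
        _ = ENNReal.ofReal M ^ (p - 1) * ∫⁻ x : E, (‖K x‖₊ : ℝ≥0∞) ∂volume := by
            apply lintegral_const_mul'
            exact (ENNReal.rpow_lt_top_of_nonneg (by linarith) ENNReal.ofReal_ne_top).ne
        _ ≤ ENNReal.ofReal M ^ (p - 1) * ENNReal.ofReal (C * Amax) :=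
            mul_le_mul_right hL1 _
        _ = ENNReal.ofReal (M ^ (p - 1) * (C * Amax)) := by
            rw [ENNReal.ofReal_rpow_of_pos hM0, ← ENNReal.ofReal_mul (by positivity)]
    have hfinal : (M ^ (p - 1) * (C * Amax)) ^ (1 / p)
        ≤ C * C' * t ^ (-(α * ↑n / β) * (1 - p⁻¹)) := by
      have hMsplit : M ^ (p - 1) * (C * Amax)
          = C ^ p * (t ^ (-(α * ↑n / β) * (p - 1)) * Amax) := by
        rw [hM, Real.mul_rpow hC.le (Real.rpow_pos_of_pos ht _).le, ← Real.rpow_mul ht.le]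
        rw [show C ^ (p - 1) * (t ^ (-(α * ↑n / β) * (p - 1))) * (C * Amax)
            = (C ^ (p - 1) * C) * (t ^ (-(α * ↑n / β) * (p - 1)) * Amax) by ring]
        rw [← Real.rpow_add_one hC.ne' (p - 1)]
        norm_num
      rw [hMsplit, Real.mul_rpow (by positivity) (by positivity),
        Real.mul_rpow (Real.rpow_pos_of_pos ht _).le hAmax0.le,
        ← Real.rpow_mul hC.le, ← Real.rpow_mul ht.le]
      have hCp : C ^ (p * (1 / p)) = C := by
        rw [mul_one_div, div_self hp0.ne', Real.rpow_one]
      have hexp : -(α * ↑n / β) * (p - 1) * (1 / p) = -(α * ↑n / β) * (1 - p⁻¹) := by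
        field_simp
      rw [hCp, hexp]
      have hA' : Amax ^ (1 / p) ≤ C' := by
        rw [hC', hp]
        exact le_max_left _ _
      have htp : (0 : ℝ) < t ^ (-(α * ↑n / β) * (1 - p⁻¹)) := Real.rpow_pos_of_pos ht _
      calc C * (t ^ (-(α * ↑n / β) * (1 - p⁻¹)) * Amax ^ (1 / p))
          ≤ C * (t ^ (-(α * ↑n / β) * (1 - p⁻¹)) * C') := by
            apply mul_le_mul_of_nonneg_left _ hC.le
            exact mul_le_mul_of_nonneg_left hA' htp.le
        _ = C * C' * t ^ (-(α * ↑n / β) * (1 - p⁻¹)) := by ring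
    calc (∫⁻ x : E, (‖K x‖₊ : ℝ≥0∞) ^ p ∂volume) ^ (1 / p)
        ≤ (ENNReal.ofReal (M ^ (p - 1) * (C * Amax))) ^ (1 / p) :=
          ENNReal.rpow_le_rpow hint (by positivity)
      _ = ENNReal.ofReal ((M ^ (p - 1) * (C * Amax)) ^ (1 / p)) :=
          ENNReal.ofReal_rpow_of_pos (by positivity)
      _ ≤ ENNReal.ofReal (C * C' * t ^ (-(α * ↑n / β) * (1 - (1 / s).toReal))) := by
          rw [hinv]
          exact ENNReal.ofReal_le_ofReal hfinal
end

section
/- Let n ≥ 1 be an integer, α ∈ (0,1), β = n, t > 0 and C > 0. Let K : ℝⁿ → ℂ be measurable and suppose |K(x)| ≤ C·t^{−α}·(|log(t^{−α}|x|^n)| + 1) for almost every x with |x| ≤ t^{α/n}, and |K(x)| ≤ C·t^{α}·|x|^{−2n} for almost every x with |x| ≥ t^{α/n}. Then for every s ∈ [1,∞) there is a constant C′ depending only on n, α, s such that ‖K‖_{L^s(ℝⁿ)} ≤ C·C′·t^{−α(1−1/s)}. -/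
/-!
Both hypotheses say that `‖K x‖ ≤ C t^{-α} g(t^{-α/n} ‖x‖)` for the single profile
`g = kernelProfile n`, which has a logarithmic singularity at `0` and decays like `ρ^{-2n}`.
Dilating by `t^{α/n}` multiplies an `L^s` norm by `t^{α/s}`, so
`‖K‖_s ≤ C t^{-α} t^{α/s} ‖g(‖·‖)‖_s`. Finally `g(‖·‖) ∈ L^s`: in polar coordinates
`ρ^{n-1} g(ρ)^s` is dominated by a multiple of `ρ^{-1/2}` on `(0, 1]` (a logarithm is beaten by
any negative power) and equals `ρ^{n-1-2ns}` on `(1, ∞)`.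
-/

open MeasureTheory Set ENNReal

theorem abs_log_rpow_add_one_le {d : ℝ} (hd : 0 ≤ d) {ε ρ : ℝ} (hε : 0 < ε) (hρ0 : 0 < ρ)
    (hρ1 : ρ ≤ 1) : |Real.log (ρ ^ d)| + 1 ≤ (d / ε + 1) * ρ ^ (-ε) := by
  have hlog : |Real.log ρ * ρ ^ ε| < 1 / ε := Real.abs_log_mul_self_rpow_lt ρ ε hρ0 hρ1 hε
  rw [abs_mul, abs_of_pos (Real.rpow_pos_of_pos hρ0 ε), lt_div_iff₀ hε] at hlog
  have hlog' : |Real.log ρ| ≤ ρ ^ (-ε) / ε := by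
    rw [Real.rpow_neg hρ0.le, le_div_iff₀ hε, ← one_div, le_div_iff₀ (by positivity)]
    linarith
  have hone : 1 ≤ ρ ^ (-ε) := Real.one_le_rpow_of_pos_of_le_one_of_nonpos hρ0 hρ1 (by linarith)
  rw [Real.log_rpow hρ0, abs_mul, abs_of_nonneg hd, add_mul, one_mul, div_mul_eq_mul_div,
    mul_div_assoc]
  gcongr

noncomputable def kernelProfile (d : ℕ) (ρ : ℝ) : ℝ :=
  if ρ ≤ 1 then |Real.log (ρ ^ (d : ℝ))| + 1 else ρ ^ (-(2 * (d : ℝ)))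

theorem kernelProfile_nonneg (d : ℕ) {ρ : ℝ} (hρ : 0 ≤ ρ) : 0 ≤ kernelProfile d ρ := by
  unfold kernelProfile; split_ifs <;> positivity

theorem measurable_kernelProfile (d : ℕ) : Measurable (kernelProfile d) :=
  Measurable.ite measurableSet_Iic (by fun_prop) (by fun_prop)

theorem le_mul_kernelProfile {n : ℕ} (hn : n ≠ 0) {t α C ρ k : ℝ} (ht : 0 < t) (hρ : 0 ≤ ρ)
    (hnear : ρ ≤ t ^ (α / n) → k ≤ C * t ^ (-α) * (|Real.log (t ^ (-α) * ρ ^ (n : ℝ))| + 1))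
    (hfar : t ^ (α / n) ≤ ρ → k ≤ C * t ^ α * ρ ^ (-(2 * (n : ℝ)))) :
    k ≤ C * t ^ (-α) * kernelProfile n ((t ^ (α / n))⁻¹ * ρ) := by
  have hn' : (n : ℝ) ≠ 0 := Nat.cast_ne_zero.2 hn
  have hscale (e : ℝ) : ((t ^ (α / n))⁻¹ * ρ) ^ (n * e) = t ^ (-α * e) * ρ ^ (n * e) := by
    rw [← Real.rpow_neg ht.le, Real.mul_rpow (by positivity) hρ, ← Real.rpow_mul ht.le]
    congr 2
    field_simp
  have hle : (t ^ (α / n))⁻¹ * ρ ≤ 1 ↔ ρ ≤ t ^ (α / n) := by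
    rw [inv_mul_le_iff₀ (by positivity), mul_one]
  rw [kernelProfile]
  split_ifs with hρ1
  · have h := hscale 1
    rw [mul_one, mul_one] at h
    rw [h]
    exact hnear (hle.1 hρ1)
  · have h := hscale (-2)
    rw [show (n : ℝ) * -2 = -(2 * n) by ring] at h
    rw [h, ← mul_assoc, mul_assoc C, ← Real.rpow_add ht]
    convert hfar (not_le.1 (hle.not.1 hρ1)).le using 4
    ring

theorem integrableOn_Ioc_pow_mul_kernelProfile_rpow (d : ℕ) {s : ℝ} (hs : 0 < s) :
    IntegrableOn (fun ρ : ℝ => ρ ^ (d - 1) * kernelProfile d ρ ^ s) (Ioc 0 1) := by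
  set c : ℝ := d / (2 * s)⁻¹ + 1
  have hdom : IntegrableOn (fun ρ : ℝ => c ^ s * ρ ^ (-(1 / 2 : ℝ))) (Ioc 0 1) :=
    (intervalIntegral.intervalIntegrable_rpow' (by norm_num)).1.const_mul _
  refine hdom.mono' ?_ (ae_restrict_of_forall_mem measurableSet_Ioc fun ρ ⟨hρ0, hρ1⟩ => ?_)
  · exact ((by fun_prop : Measurable fun ρ : ℝ => ρ ^ (d - 1)).mul
      ((measurable_kernelProfile d).pow_const s)).aestronglyMeasurable
  have hG : kernelProfile d ρ ≤ c * ρ ^ (-(2 * s)⁻¹) := by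
    rw [kernelProfile, if_pos hρ1]
    exact abs_log_rpow_add_one_le (Nat.cast_nonneg d) (by positivity) hρ0 hρ1
  have hG0 := kernelProfile_nonneg d hρ0.le
  rw [Real.norm_of_nonneg (by positivity)]
  calc ρ ^ (d - 1) * kernelProfile d ρ ^ s ≤ 1 * (c * ρ ^ (-(2 * s)⁻¹)) ^ s := by
        gcongr
        exact pow_le_one₀ hρ0.le hρ1
    _ = c ^ s * ρ ^ (-(1 / 2 : ℝ)) := by
        rw [one_mul, Real.mul_rpow (by positivity) (by positivity), ← Real.rpow_mul hρ0.le]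
        congr 2
        field_simp

theorem integrableOn_Ioi_one_pow_mul_kernelProfile_rpow {d : ℕ} (hd : d ≠ 0) {s : ℝ}
    (hs : 1 / 2 < s) :
    IntegrableOn (fun ρ : ℝ => ρ ^ (d - 1) * kernelProfile d ρ ^ s) (Ioi 1) := by
  have hexp : (d : ℝ) - 1 - 2 * d * s < -1 := by
    have : (1 : ℝ) ≤ d := Nat.one_le_cast.2 (Nat.one_le_iff_ne_zero.2 hd)
    nlinarith
  refine (integrableOn_Ioi_rpow_of_lt hexp one_pos).congr_fun (fun ρ hρ => ?_) measurableSet_Ioi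
  have hρ0 : 0 < ρ := one_pos.trans hρ
  rw [kernelProfile, if_neg (not_le.2 hρ), ← Real.rpow_mul hρ0.le, ← Real.rpow_natCast,
    Nat.cast_pred (Nat.pos_of_ne_zero hd), ← Real.rpow_add hρ0]
  ring_nf

theorem integrableOn_Ioi_pow_mul_kernelProfile_rpow {d : ℕ} (hd : d ≠ 0) {s : ℝ}
    (hs : 1 / 2 < s) :
    IntegrableOn (fun ρ : ℝ => ρ ^ (d - 1) * kernelProfile d ρ ^ s) (Ioi 0) := by
  rw [← Ioc_union_Ioi_eq_Ioi zero_le_one]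
  exact (integrableOn_Ioc_pow_mul_kernelProfile_rpow d (by linarith)).union
    (integrableOn_Ioi_one_pow_mul_kernelProfile_rpow hd hs)

section AddHaar

variable {E F : Type*} [NormedAddCommGroup E] [NormedSpace ℝ E] [FiniteDimensional ℝ E]
  [MeasurableSpace E] [BorelSpace E] [NormedAddCommGroup F] (μ : Measure E) [μ.IsAddHaarMeasure]

theorem eLpNorm_comp_smul_addHaar {r : ℝ} (hr : r ≠ 0) (f : E → F) (p : ℝ≥0∞) :
    eLpNorm (fun x => f (r • x)) p μ
      = ENNReal.ofReal |r ^ Module.finrank ℝ E|⁻¹ ^ (1 / p).toReal * eLpNorm f p μ := by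
  have hsmul : MeasurableEmbedding (r • · : E → E) :=
    (Homeomorph.smulOfNeZero r hr).measurableEmbedding
  rw [← Function.comp_def, ← hsmul.eLpNorm_map_measure, Measure.map_addHaar_smul μ hr,
    eLpNorm_smul_measure_of_ne_zero (by simp [hr]), smul_eq_mul, abs_inv]

theorem eLpNorm_comp_inv_smul_ofReal {R s : ℝ} (hR : 0 < R) (hs : 0 < s) (f : E → F) :
    eLpNorm (fun x => f (R⁻¹ • x)) (ENNReal.ofReal s) μ
      = ENNReal.ofReal (R ^ (Module.finrank ℝ E / s)) * eLpNorm f (ENNReal.ofReal s) μ := by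
  rw [eLpNorm_comp_smul_addHaar μ (inv_ne_zero hR.ne'), inv_pow, abs_inv, inv_inv,
    abs_of_pos (by positivity), one_div, ENNReal.toReal_inv, ENNReal.toReal_ofReal hs.le,
    ENNReal.ofReal_rpow_of_nonneg (by positivity) (by positivity), ← Real.rpow_natCast,
    ← Real.rpow_mul hR.le, div_eq_mul_inv]

theorem eLpNorm_le_of_ae_norm_le_mul_comp_inv_smul {R s A : ℝ} (hR : 0 < R) (hs : 0 < s)
    (hA : 0 ≤ A) {f : E → F} {g : E → ℝ} (h : ∀ᵐ x ∂μ, ‖f x‖ ≤ A * g (R⁻¹ • x)) :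
    eLpNorm f (ENNReal.ofReal s) μ
      ≤ ENNReal.ofReal (A * R ^ (Module.finrank ℝ E / s)) * eLpNorm g (ENNReal.ofReal s) μ :=
  calc eLpNorm f (ENNReal.ofReal s) μ
      ≤ eLpNorm (A • fun x => g (R⁻¹ • x)) (ENNReal.ofReal s) μ := eLpNorm_mono_ae_real h
    _ = ENNReal.ofReal (A * R ^ (Module.finrank ℝ E / s)) * eLpNorm g (ENNReal.ofReal s) μ := by
      rw [eLpNorm_const_smul, eLpNorm_comp_inv_smul_ofReal μ hR hs, Real.enorm_of_nonneg hA,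
        ← mul_assoc, ← ofReal_mul hA]

theorem memLp_kernelProfile_norm (hE : Module.finrank ℝ E ≠ 0) {s : ℝ} (hs : 1 / 2 < s) :
    MemLp (fun x : E => kernelProfile (Module.finrank ℝ E) ‖x‖) (ENNReal.ofReal s) μ := by
  have hs0 : 0 < s := by linarith
  have : Nontrivial E := Module.nontrivial_of_finrank_pos (Nat.pos_of_ne_zero hE)
  have hmeas : AEStronglyMeasurable (fun x : E => kernelProfile (Module.finrank ℝ E) ‖x‖) μ :=
    ((measurable_kernelProfile _).comp measurable_norm).aestronglyMeasurable
  rw [← integrable_norm_rpow_iff hmeas (by simpa using hs0) ofReal_ne_top,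
    ENNReal.toReal_ofReal hs0.le]
  simp_rw [Real.norm_of_nonneg (kernelProfile_nonneg _ (norm_nonneg _))]
  exact (integrable_fun_norm_addHaar μ (f := fun ρ => kernelProfile (Module.finrank ℝ E) ρ ^ s)).2
    (integrableOn_Ioi_pow_mul_kernelProfile_rpow hE hs)

end AddHaar

theorem Ls_estimate_S_beta_eq_n_general
    (n : ℕ) (hn : 1 ≤ n) (α : ℝ)
    (s : ℝ) (hs : 1 ≤ s) :
    ∃ C' : ℝ, 0 < C' ∧
      ∀ (t C : ℝ), 0 < t → 0 < C →
        ∀ K : EuclideanSpace ℝ (Fin n) → ℂ, Measurable K →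
          (∀ᵐ x : EuclideanSpace ℝ (Fin n) ∂volume,
            ‖x‖ ≤ t ^ (α / n) →
              ‖K x‖ ≤ C * t ^ (-α) * (|Real.log (t ^ (-α) * ‖x‖ ^ (n : ℝ))| + 1)) →
          (∀ᵐ x : EuclideanSpace ℝ (Fin n) ∂volume,
            t ^ (α / n) ≤ ‖x‖ → ‖K x‖ ≤ C * t ^ α * ‖x‖ ^ (-(2 * (n : ℝ)))) →
          eLpNorm K (ENNReal.ofReal s) volume
            ≤ ENNReal.ofReal (C * C' * t ^ (-α * (1 - 1 / s))) := by
  have hn0 : n ≠ 0 := by omega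
  have hs0 : 0 < s := by linarith
  have hdim : Module.finrank ℝ (EuclideanSpace ℝ (Fin n)) = n := finrank_euclideanSpace_fin
  have hG := memLp_kernelProfile_norm (volume : Measure (EuclideanSpace ℝ (Fin n)))
    (hdim.symm ▸ hn0) (s := s) (by linarith)
  rw [hdim] at hG
  set N :=
    eLpNorm (fun x : EuclideanSpace ℝ (Fin n) => kernelProfile n ‖x‖) (ENNReal.ofReal s) volume
  have hN : N ≤ ENNReal.ofReal (N.toReal + 1) :=
    (ENNReal.le_ofReal_iff_toReal_le hG.eLpNorm_ne_top (by positivity)).2 (by linarith)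
  refine ⟨N.toReal + 1, by positivity, fun t C ht hC K _ hnear hfar => ?_⟩
  have hK : ∀ᵐ x ∂volume, ‖K x‖ ≤ C * t ^ (-α) * kernelProfile n ‖(t ^ (α / n))⁻¹ • x‖ := by
    filter_upwards [hnear, hfar] with x h₁ h₂
    rw [norm_smul, Real.norm_of_nonneg (by positivity)]
    exact le_mul_kernelProfile hn0 ht (norm_nonneg x) h₁ h₂
  have hscale : C * t ^ (-α) * (t ^ (α / n)) ^ (n / s) = C * t ^ (-α * (1 - 1 / s)) := by
    rw [← Real.rpow_mul ht.le, div_mul_div_cancel₀ (by simpa), mul_assoc, ← Real.rpow_add ht]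
    ring_nf
  have hKN := eLpNorm_le_of_ae_norm_le_mul_comp_inv_smul volume (by positivity) hs0
    (by positivity) (g := fun x => kernelProfile n ‖x‖) hK
  rw [hdim] at hKN
  calc eLpNorm K (ENNReal.ofReal s) volume
      ≤ ENNReal.ofReal (C * t ^ (-α) * (t ^ (α / n)) ^ (n / s)) * N := hKN
    _ ≤ ENNReal.ofReal (C * t ^ (-α * (1 - 1 / s))) * ENNReal.ofReal (N.toReal + 1) := by
        rw [hscale]
        gcongr
    _ = ENNReal.ofReal (C * (N.toReal + 1) * t ^ (-α * (1 - 1 / s))) := by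
        rw [← ofReal_mul (by positivity)]
        ring_nf

/-- Lemma 3.2(1b): the case `β = n`.  If `K` obeys the pointwise bounds of
Lemma 3.1(1) for `β = n` (with constant `C` and time `t`), then for every real
`s ∈ [1,∞)`, `‖K‖_{L^s} ≤ C C' t^{-α(1-1/s)}` with `C'` depending only on `n, α, s`. -/
theorem Ls_estimate_S_beta_eq_n
    (n : ℕ) (hn : 1 ≤ n) (α : ℝ) (hα0 : 0 < α) (hα1 : α < 1)
    (s : ℝ) (hs : 1 ≤ s) :
    ∃ C' : ℝ, 0 < C' ∧
      ∀ (t C : ℝ), 0 < t → 0 < C →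
        ∀ K : EuclideanSpace ℝ (Fin n) → ℂ, Measurable K →
          (∀ᵐ x : EuclideanSpace ℝ (Fin n) ∂volume,
            ‖x‖ ≤ t ^ (α / n) →
              ‖K x‖ ≤ C * t ^ (-α) * (|Real.log (t ^ (-α) * ‖x‖ ^ (n : ℝ))| + 1)) →
          (∀ᵐ x : EuclideanSpace ℝ (Fin n) ∂volume,
            t ^ (α / n) ≤ ‖x‖ → ‖K x‖ ≤ C * t ^ α * ‖x‖ ^ (-(2 * (n : ℝ)))) →
          eLpNorm K (ENNReal.ofReal s) volume
            ≤ ENNReal.ofReal (C * C' * t ^ (-α * (1 - 1 / s))) :=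
  Ls_estimate_S_beta_eq_n_general n hn α s hs
end

section
/- Let n ≥ 1 be an integer, α ∈ (0,1), 0 < β < n reals, t > 0 and C > 0. Let K : ℝⁿ → ℂ be measurable and suppose |K(x)| ≤ C·t^{−α}·|x|^{β−n} for almost every x with |x| ≤ t^{α/β}, and |K(x)| ≤ C·t^{α}·|x|^{−n−β} for almost every x with |x| ≥ t^{α/β}. Then: (a) for every s ∈ [1, n/(n−β)) there is a constant C′ depending only on n, α, β, s with ‖K‖_{L^s(ℝⁿ)} ≤ C·C′·t^{−(αn/β)(1−1/s)}; and (b) there is a constant C″ depending only on n, α, β such that for every λ > 0, λ · (vol{x ∈ ℝⁿ : |K(x)| > λ})^{(n−β)/n} ≤ C·C″·t^{−α}. -/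
/-!
Put `R = t^(α/β)`. The two pointwise bounds differ by the factor `(R/|x|)^(2β)`, so each one
dominates the other on the far side of `R`, and both hold for almost every `x`. A power law
`|K(x)| ≤ A |x|^(-c)` confines `{|K| > λ}` to the ball of radius `(A/λ)^(1/c)`, whence
`vol{|K| > λ} ≤ |B₁| (A/λ)^(n/c)`; with `c = n - β` this is (b). For (a), split the layer-cake
integral `‖K‖_s^s = s ∫ λ^(s-1) vol{|K| > λ} dλ` at `λ = C t^(-αn/β)`, the common value of the
two bounds on `|x| = R`: the weak `L^(n/(n+β))` bound (from `c = n + β`) controls small `λ` and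
the weak `L^(n/(n-β))` bound controls large `λ`, and both pieces converge because
`n/(n+β) < 1 ≤ s < n/(n-β)`.
-/

open MeasureTheory Set ENNReal

open Metric Module

lemma lintegral_Ioc_zero_rpow {c e : ℝ} (hc : 0 < c) (he : -1 < e) :
    ∫⁻ x in Ioc (0 : ℝ) c, ENNReal.ofReal (x ^ e) = ENNReal.ofReal (c ^ (e + 1) / (e + 1)) := by
  have hint : IntegrableOn (fun x : ℝ => x ^ e) (Ioc 0 c) := by
    rw [← intervalIntegrable_iff_integrableOn_Ioc_of_le hc.le]
    exact intervalIntegral.intervalIntegrable_rpow' he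
  rw [← ofReal_integral_eq_lintegral_ofReal hint
      ((ae_restrict_mem measurableSet_Ioc).mono fun x hx => Real.rpow_nonneg hx.1.le e),
    ← intervalIntegral.integral_of_le hc.le, integral_rpow (Or.inl he),
    Real.zero_rpow (by linarith), sub_zero]

lemma lintegral_Ioi_rpow_of_lt {c e : ℝ} (hc : 0 < c) (he : e < -1) :
    ∫⁻ x in Ioi c, ENNReal.ofReal (x ^ e) = ENNReal.ofReal (c ^ (e + 1) / -(e + 1)) := by
  rw [← ofReal_integral_eq_lintegral_ofReal (integrableOn_Ioi_rpow_of_lt he hc)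
      ((ae_restrict_mem measurableSet_Ioi).mono fun x hx => Real.rpow_nonneg (hc.trans hx).le e),
    integral_Ioi_rpow_of_lt he hc, div_neg, neg_div]

section LayerCake

variable {Ω : Type*} [MeasurableSpace Ω] {μ : Measure Ω} {f : Ω → ℝ}

lemma setLIntegral_meas_lt_mul_rpow_le {S : Set ℝ} (hS : MeasurableSet S) (hS0 : S ⊆ Ioi 0)
    {V : ℝ≥0∞} {B p s : ℝ} (hB : 0 ≤ B)
    (hf : ∀ l ∈ S, μ {x | l < f x} ≤ V * ENNReal.ofReal ((B / l) ^ p)) :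
    ∫⁻ l in S, μ {x | l < f x} * ENNReal.ofReal (l ^ (s - 1)) ≤
      V * ENNReal.ofReal (B ^ p) * ∫⁻ l in S, ENNReal.ofReal (l ^ (s - 1 - p)) := by
  rw [← lintegral_const_mul _ (by fun_prop)]
  refine lintegral_mono_ae ((ae_restrict_mem hS).mono fun l hl => ?_)
  have hl0 : 0 < l := hS0 hl
  have hsplit : (B / l) ^ p * l ^ (s - 1) = B ^ p * l ^ (s - 1 - p) := by
    rw [Real.div_rpow hB hl0.le, Real.rpow_sub hl0 (s - 1)]
    field_simp
  calc μ {x | l < f x} * ENNReal.ofReal (l ^ (s - 1))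
      ≤ V * ENNReal.ofReal ((B / l) ^ p) * ENNReal.ofReal (l ^ (s - 1)) := by gcongr; exact hf l hl
    _ = V * ENNReal.ofReal (B ^ p) * ENNReal.ofReal (l ^ (s - 1 - p)) := by
      rw [mul_assoc, ← ENNReal.ofReal_mul (by positivity), hsplit,
        ENNReal.ofReal_mul (by positivity), mul_assoc]

theorem lintegral_rpow_le_of_meas_lt_le (hf0 : 0 ≤ᵐ[μ] f) (hf : AEMeasurable f μ)
    {V : ℝ≥0∞} {A B p q s L : ℝ} (hA : 0 ≤ A) (hB : 0 ≤ B) (hs : 0 < s) (hps : p < s)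
    (hsq : s < q) (hL : 0 < L)
    (hfp : ∀ l, 0 < l → μ {x | l < f x} ≤ V * ENNReal.ofReal ((B / l) ^ p))
    (hfq : ∀ l, 0 < l → μ {x | l < f x} ≤ V * ENNReal.ofReal ((A / l) ^ q)) :
    ∫⁻ x, ENNReal.ofReal (f x ^ s) ∂μ ≤
      V * ENNReal.ofReal (s * (B ^ p * L ^ (s - p) / (s - p) + A ^ q * L ^ (s - q) / (q - s))) := by
  rw [lintegral_rpow_eq_lintegral_meas_lt_mul μ hf0 hf hs, ← Ioc_union_Ioi_eq_Ioi hL.le,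
    lintegral_union measurableSet_Ioi (Ioc_disjoint_Ioi le_rfl)]
  have hnear := setLIntegral_meas_lt_mul_rpow_le (s := s) (measurableSet_Ioc (a := 0) (b := L))
    (fun l hl => hl.1) hB fun l hl => hfp l hl.1
  have hfar := setLIntegral_meas_lt_mul_rpow_le (s := s) measurableSet_Ioi
    (fun l hl => hL.trans hl) hA fun l hl => hfq l (hL.trans hl)
  rw [lintegral_Ioc_zero_rpow hL (by linarith), show s - 1 - p + 1 = s - p by ring] at hnear
  rw [lintegral_Ioi_rpow_of_lt hL (by linarith), show s - 1 - q + 1 = s - q by ring,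
    neg_sub] at hfar
  calc _ ≤ ENNReal.ofReal s * (V * ENNReal.ofReal (B ^ p) * ENNReal.ofReal (L ^ (s - p) / (s - p))
        + V * ENNReal.ofReal (A ^ q) * ENNReal.ofReal (L ^ (s - q) / (q - s))) := by
        gcongr
    _ = _ := by
      have : 0 ≤ s - p := by linarith
      have : 0 ≤ q - s := by linarith
      rw [mul_div_assoc, mul_div_assoc, ENNReal.ofReal_mul hs.le,
        ENNReal.ofReal_add (by positivity) (by positivity), ENNReal.ofReal_mul (by positivity),
        ENNReal.ofReal_mul (by positivity)]
      ring

end LayerCake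

section PowerLawMajorant

variable {E : Type*} [NormedAddCommGroup E] [NormedSpace ℝ E] [MeasurableSpace E] [BorelSpace E]
  [FiniteDimensional ℝ E] (μ : Measure E) [μ.IsAddHaarMeasure]

theorem measure_lt_le_of_le_mul_norm_rpow_neg {f : E → ℝ} {A c l : ℝ} (hA : 0 < A) (hc : 0 < c)
    (hl : 0 < l) (hf : ∀ᵐ x ∂μ, x ≠ 0 → f x ≤ A * ‖x‖ ^ (-c)) :
    μ {x | l < f x} ≤ μ (ball 0 1) * ENNReal.ofReal ((A / l) ^ (finrank ℝ E / c)) := by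
  have hAl : 0 < A / l := div_pos hA hl
  set r := (A / l) ^ c⁻¹
  have hr : 0 < r := Real.rpow_pos_of_pos hAl _
  calc μ {x | l < f x} ≤ μ (ball 0 r) := by
        refine measure_mono_ae (hf.mono fun x hx (hlx : l < f x) => show x ∈ ball 0 r from ?_)
        rcases eq_or_ne x 0 with rfl | hx0
        · exact mem_ball_self hr
        have hxc : 0 < ‖x‖ ^ c := Real.rpow_pos_of_pos (norm_pos_iff.2 hx0) c
        have hlt : l < A / ‖x‖ ^ c := by
          simpa only [Real.rpow_neg (norm_nonneg x), div_eq_mul_inv] using hlx.trans_le (hx hx0)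
        rw [mem_ball_zero_iff, Real.lt_rpow_inv_iff_of_pos (norm_nonneg x) hAl.le hc,
          lt_div_iff₀ hl, mul_comm]
        rwa [lt_div_iff₀ hxc] at hlt
    _ = μ (ball 0 1) * ENNReal.ofReal ((A / l) ^ (finrank ℝ E / c)) := by
      rw [Measure.addHaar_ball_of_pos μ 0 hr, mul_comm, ← Real.rpow_natCast,
        ← Real.rpow_mul hAl.le, inv_mul_eq_div]

end PowerLawMajorant

section NearFar

variable {α β t r N : ℝ}

lemma rpow_mul_rpow_neg_sub_eq (ht : 0 < t) (hr : 0 < r) (hβ : β ≠ 0) :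
    t ^ α * r ^ (-N - β) = t ^ (-α) * r ^ (β - N) * (t ^ (α / β) / r) ^ (2 * β) := by
  have ht' : t ^ α = t ^ (-α) * t ^ (α / β * (2 * β)) := by
    rw [← Real.rpow_add ht]; congr 1; field_simp; ring
  have hr' : r ^ (-N - β) = r ^ (β - N) / r ^ (2 * β) := by
    rw [← Real.rpow_sub hr]; ring_nf
  rw [Real.div_rpow (Real.rpow_nonneg ht.le _) hr.le, ← Real.rpow_mul ht.le, ht', hr']
  ring

lemma rpow_neg_mul_rpow_sub_le_of_le (ht : 0 < t) (hr : 0 < r) (hβ : 0 < β)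
    (hrR : r ≤ t ^ (α / β)) : t ^ (-α) * r ^ (β - N) ≤ t ^ α * r ^ (-N - β) := by
  rw [rpow_mul_rpow_neg_sub_eq ht hr hβ.ne']
  exact le_mul_of_one_le_right (by positivity)
    (Real.one_le_rpow ((one_le_div hr).2 hrR) (by positivity))

lemma rpow_mul_rpow_neg_sub_le_of_le (ht : 0 < t) (hr : 0 < r) (hβ : 0 < β)
    (hRr : t ^ (α / β) ≤ r) : t ^ α * r ^ (-N - β) ≤ t ^ (-α) * r ^ (β - N) := by
  rw [rpow_mul_rpow_neg_sub_eq ht hr hβ.ne']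
  exact mul_le_of_le_one_right (by positivity)
    (Real.rpow_le_one (by positivity) ((div_le_one hr).2 hRr) (by positivity))

theorem ae_norm_le_of_near_far {E F : Type*} [NormedAddCommGroup E] [MeasurableSpace E]
    [Norm F] {μ : Measure E} {K : E → F} {C : ℝ} (hβ : 0 < β) (ht : 0 < t) (hC : 0 ≤ C)
    (hnear : ∀ᵐ x ∂μ, ‖x‖ ≤ t ^ (α / β) → ‖K x‖ ≤ C * t ^ (-α) * ‖x‖ ^ (β - N))
    (hfar : ∀ᵐ x ∂μ, t ^ (α / β) ≤ ‖x‖ → ‖K x‖ ≤ C * t ^ α * ‖x‖ ^ (-N - β)) :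
    (∀ᵐ x ∂μ, x ≠ 0 → ‖K x‖ ≤ C * t ^ (-α) * ‖x‖ ^ (-(N - β))) ∧
      ∀ᵐ x ∂μ, x ≠ 0 → ‖K x‖ ≤ C * t ^ α * ‖x‖ ^ (-(N + β)) := by
  have hboth : ∀ᵐ x ∂μ, x ≠ 0 →
      ‖K x‖ ≤ C * t ^ (-α) * ‖x‖ ^ (β - N) ∧ ‖K x‖ ≤ C * t ^ α * ‖x‖ ^ (-N - β) := by
    filter_upwards [hnear, hfar] with x hxn hxf hx0
    have hx := norm_pos_iff.2 hx0
    simp only [mul_assoc] at hxn hxf ⊢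
    rcases le_total ‖x‖ (t ^ (α / β)) with hxR | hRx
    · exact ⟨hxn hxR, (hxn hxR).trans
        (mul_le_mul_of_nonneg_left (rpow_neg_mul_rpow_sub_le_of_le ht hx hβ hxR) hC)⟩
    · exact ⟨(hxf hRx).trans
        (mul_le_mul_of_nonneg_left (rpow_mul_rpow_neg_sub_le_of_le ht hx hβ hRx) hC), hxf hRx⟩
  rw [neg_sub, neg_add']
  exact ⟨hboth.mono fun x hx hx0 => (hx hx0).1, hboth.mono fun x hx hx0 => (hx hx0).2⟩

end NearFar

lemma mul_rpow_mul_mul_rpow {C t : ℝ} (hC : 0 < C) (ht : 0 < t) (a b c d : ℝ) :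
    (C * t ^ c) ^ a * (C * t ^ d) ^ b = C ^ (a + b) * t ^ (c * a + d * b) := by
  rw [Real.mul_rpow hC.le (by positivity), Real.mul_rpow hC.le (by positivity),
    ← Real.rpow_mul ht.le, ← Real.rpow_mul ht.le, Real.rpow_add hC, Real.rpow_add ht]
  ring

section Euclidean

variable {n : ℕ} {α β t C s : ℝ} {K : EuclideanSpace ℝ (Fin n) → ℂ}

noncomputable def strongTypeConst (n : ℕ) (β s : ℝ) : ℝ :=
  ((volume (ball (0 : EuclideanSpace ℝ (Fin n)) 1) *
    ENNReal.ofReal (s * (1 / (s - n / (n + β)) + 1 / (n / (n - β) - s)))) ^ (1 / s)).toReal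

noncomputable def weakTypeConst (n : ℕ) (β : ℝ) : ℝ :=
  (volume (ball (0 : EuclideanSpace ℝ (Fin n)) 1) ^ ((n - β) / n)).toReal

lemma volume_unitBall_pos : 0 < volume (ball (0 : EuclideanSpace ℝ (Fin n)) 1) :=
  measure_ball_pos volume 0 one_pos

lemma volume_lt_le_of_le_mul_norm_rpow_neg {f : EuclideanSpace ℝ (Fin n) → ℝ} {A c l : ℝ}
    (hA : 0 < A) (hc : 0 < c) (hl : 0 < l) (hf : ∀ᵐ x ∂volume, x ≠ 0 → f x ≤ A * ‖x‖ ^ (-c)) :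
    volume {x | l < f x} ≤
      volume (ball (0 : EuclideanSpace ℝ (Fin n)) 1) * ENNReal.ofReal ((A / l) ^ (n / c)) := by
  simpa only [finrank_euclideanSpace_fin] using
    measure_lt_le_of_le_mul_norm_rpow_neg volume hA hc hl hf

lemma strongTypeConst_pos (hβ : 0 < β) (hs1 : 1 ≤ s) (hs2 : s < n / (n - β)) :
    0 < strongTypeConst n β s := by
  have hγ : (n : ℝ) / (n + β) < s :=
    ((div_lt_one (by positivity)).2 (by linarith)).trans_le hs1
  have hM : 0 < s * (1 / (s - n / (n + β)) + 1 / (n / (n - β) - s)) := by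
    have := sub_pos.2 hγ
    have := sub_pos.2 hs2
    positivity
  have hfin : volume (ball (0 : EuclideanSpace ℝ (Fin n)) 1) *
      ENNReal.ofReal (s * (1 / (s - n / (n + β)) + 1 / (n / (n - β) - s))) ≠ ⊤ :=
    ENNReal.mul_ne_top measure_ball_lt_top.ne ENNReal.ofReal_ne_top
  exact ENNReal.toReal_pos
    (ENNReal.rpow_pos (ENNReal.mul_pos volume_unitBall_pos.ne' (ENNReal.ofReal_pos.2 hM).ne')
      hfin).ne' (ENNReal.rpow_ne_top_of_nonneg (by positivity) hfin)

lemma weakTypeConst_pos (n : ℕ) (β : ℝ) : 0 < weakTypeConst n β :=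
  ENNReal.toReal_pos (ENNReal.rpow_pos volume_unitBall_pos measure_ball_lt_top.ne).ne'
    (ENNReal.rpow_ne_top_of_ne_zero volume_unitBall_pos.ne' measure_ball_lt_top.ne)

theorem lintegral_norm_rpow_le_of_near_far (hβ0 : 0 < β) (hβn : β < n) (ht : 0 < t) (hC : 0 < C)
    (hK : Measurable K)
    (hnear : ∀ᵐ x ∂volume, ‖x‖ ≤ t ^ (α / β) → ‖K x‖ ≤ C * t ^ (-α) * ‖x‖ ^ (β - n))
    (hfar : ∀ᵐ x ∂volume, t ^ (α / β) ≤ ‖x‖ → ‖K x‖ ≤ C * t ^ α * ‖x‖ ^ (-(n : ℝ) - β))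
    (hs1 : 1 ≤ s) (hs2 : s < n / (n - β)) :
    ∫⁻ x, ENNReal.ofReal (‖K x‖ ^ s) ≤
      volume (ball (0 : EuclideanSpace ℝ (Fin n)) 1) *
        ENNReal.ofReal (s * (1 / (s - n / (n + β)) + 1 / (n / (n - β) - s))) *
        ENNReal.ofReal (C ^ s * t ^ (-(α * n / β) * (s - 1))) := by
  obtain ⟨hnear', hfar'⟩ := ae_norm_le_of_near_far hβ0 ht hC.le hnear hfar
  have hγ : (n : ℝ) / (n + β) < s :=
    ((div_lt_one (by positivity)).2 (by linarith)).trans_le hs1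
  have hB : (C * t ^ α) ^ (n / (n + β)) * (C * t ^ (-(α * n / β))) ^ (s - n / (n + β)) =
      C ^ s * t ^ (-(α * n / β) * (s - 1)) := by
    rw [mul_rpow_mul_mul_rpow hC ht, add_sub_cancel]
    congr 2
    field_simp
    ring
  have hA : (C * t ^ (-α)) ^ (n / (n - β)) * (C * t ^ (-(α * n / β))) ^ (s - n / (n - β)) =
      C ^ s * t ^ (-(α * n / β) * (s - 1)) := by
    rw [mul_rpow_mul_mul_rpow hC ht, add_sub_cancel]
    have : (n : ℝ) - β ≠ 0 := by linarith
    congr 2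
    field_simp
    ring
  have hdist_far := fun l (hl : 0 < l) =>
    volume_lt_le_of_le_mul_norm_rpow_neg (by positivity) (by positivity) hl hfar'
  have hdist_near := fun l (hl : 0 < l) =>
    volume_lt_le_of_le_mul_norm_rpow_neg (by positivity) (sub_pos.2 hβn) hl hnear'
  refine (lintegral_rpow_le_of_meas_lt_le (ae_of_all _ fun x => norm_nonneg (K x))
    hK.norm.aemeasurable (by positivity) (by positivity) (by linarith) hγ hs2
    (L := C * t ^ (-(α * n / β))) (by positivity) hdist_far hdist_near).trans_eq ?_
  rw [mul_assoc, ← ENNReal.ofReal_mul' (by positivity), hB, hA]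
  ring_nf

theorem eLpNorm_le_of_near_far (hβ0 : 0 < β) (hβn : β < n) (ht : 0 < t) (hC : 0 < C)
    (hK : Measurable K)
    (hnear : ∀ᵐ x ∂volume, ‖x‖ ≤ t ^ (α / β) → ‖K x‖ ≤ C * t ^ (-α) * ‖x‖ ^ (β - n))
    (hfar : ∀ᵐ x ∂volume, t ^ (α / β) ≤ ‖x‖ → ‖K x‖ ≤ C * t ^ α * ‖x‖ ^ (-(n : ℝ) - β))
    (hs1 : 1 ≤ s) (hs2 : s < n / (n - β)) :
    eLpNorm K (ENNReal.ofReal s) volume ≤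
      ENNReal.ofReal (C * strongTypeConst n β s * t ^ (-(α * n / β) * (1 - 1 / s))) := by
  have hs : 0 < s := one_pos.trans_le hs1
  have hfin : (volume (ball (0 : EuclideanSpace ℝ (Fin n)) 1) *
      ENNReal.ofReal (s * (1 / (s - n / (n + β)) + 1 / (n / (n - β) - s)))) ^ (1 / s) ≠ ⊤ :=
    ENNReal.rpow_ne_top_of_nonneg (by positivity)
      (ENNReal.mul_ne_top measure_ball_lt_top.ne ENNReal.ofReal_ne_top)
  rw [eLpNorm_eq_lintegral_rpow_enorm_toReal (by simpa using hs) ENNReal.ofReal_ne_top,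
    ENNReal.toReal_ofReal hs.le]
  simp_rw [← ofReal_norm, ENNReal.ofReal_rpow_of_nonneg (norm_nonneg _) hs.le]
  calc _ ≤ _ := ENNReal.rpow_le_rpow
        (lintegral_norm_rpow_le_of_near_far hβ0 hβn ht hC hK hnear hfar hs1 hs2) (by positivity)
    _ = _ := by
      rw [ENNReal.mul_rpow_of_nonneg _ _ (by positivity),
        ENNReal.ofReal_rpow_of_nonneg (by positivity) (by positivity),
        ← ENNReal.ofReal_toReal hfin, ← ENNReal.ofReal_mul ENNReal.toReal_nonneg, strongTypeConst]
      congr 1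
      rw [Real.mul_rpow (by positivity) (by positivity), ← Real.rpow_mul hC.le,
        ← Real.rpow_mul ht.le, mul_one_div_cancel hs.ne', Real.rpow_one,
        show -(α * n / β) * (s - 1) * (1 / s) = -(α * n / β) * (1 - 1 / s) by field_simp]
      ring

theorem ofReal_mul_volume_lt_norm_rpow_le_of_near_far {lam : ℝ} (hβ0 : 0 < β) (hβn : β < n)
    (ht : 0 < t) (hC : 0 < C)
    (hnear : ∀ᵐ x ∂volume, ‖x‖ ≤ t ^ (α / β) → ‖K x‖ ≤ C * t ^ (-α) * ‖x‖ ^ (β - n))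
    (hfar : ∀ᵐ x ∂volume, t ^ (α / β) ≤ ‖x‖ → ‖K x‖ ≤ C * t ^ α * ‖x‖ ^ (-(n : ℝ) - β))
    (hlam : 0 < lam) :
    ENNReal.ofReal lam * volume {x | lam < ‖K x‖} ^ (((n : ℝ) - β) / n) ≤
      ENNReal.ofReal (C * weakTypeConst n β * t ^ (-α)) := by
  have hnβ : 0 < (n : ℝ) - β := sub_pos.2 hβn
  have hfin : volume (ball (0 : EuclideanSpace ℝ (Fin n)) 1) ^ (((n : ℝ) - β) / n) ≠ ⊤ :=
    ENNReal.rpow_ne_top_of_nonneg (by positivity) measure_ball_lt_top.ne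
  have hdist := volume_lt_le_of_le_mul_norm_rpow_neg (by positivity) hnβ hlam
    (ae_norm_le_of_near_far hβ0 ht hC.le hnear hfar).1
  calc _ ≤ ENNReal.ofReal lam * (volume (ball (0 : EuclideanSpace ℝ (Fin n)) 1) *
        ENNReal.ofReal ((C * t ^ (-α) / lam) ^ (n / (n - β)))) ^ (((n : ℝ) - β) / n) := by
        gcongr
    _ = _ := by
      rw [ENNReal.mul_rpow_of_nonneg _ _ (by positivity),
        ENNReal.ofReal_rpow_of_nonneg (by positivity) (by positivity),
        ← Real.rpow_mul (by positivity), div_mul_div_cancel₀ hnβ.ne', div_self (hβ0.trans hβn).ne',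
        Real.rpow_one, ← ENNReal.ofReal_toReal hfin, ← ENNReal.ofReal_mul ENNReal.toReal_nonneg,
        ← ENNReal.ofReal_mul hlam.le, weakTypeConst]
      congr 1
      field_simp

end Euclidean

theorem Ls_estimate_S_beta_lt_n_general
    (n : ℕ) (α β : ℝ)
    (hβ0 : 0 < β) (hβn : β < n) :
    (∀ s : ℝ, 1 ≤ s → s < n / ((n : ℝ) - β) →
      ∃ C' : ℝ, 0 < C' ∧
        ∀ (t C : ℝ), 0 < t → 0 < C →
          ∀ K : EuclideanSpace ℝ (Fin n) → ℂ, Measurable K →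
            (∀ᵐ x : EuclideanSpace ℝ (Fin n) ∂volume,
              ‖x‖ ≤ t ^ (α / β) → ‖K x‖ ≤ C * t ^ (-α) * ‖x‖ ^ (β - n)) →
            (∀ᵐ x : EuclideanSpace ℝ (Fin n) ∂volume,
              t ^ (α / β) ≤ ‖x‖ → ‖K x‖ ≤ C * t ^ α * ‖x‖ ^ (-(n : ℝ) - β)) →
            eLpNorm K (ENNReal.ofReal s) volume
              ≤ ENNReal.ofReal (C * C' * t ^ (-(α * n / β) * (1 - 1 / s)))) ∧
    (∃ C'' : ℝ, 0 < C'' ∧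
      ∀ (t C : ℝ), 0 < t → 0 < C →
        ∀ K : EuclideanSpace ℝ (Fin n) → ℂ, Measurable K →
          (∀ᵐ x : EuclideanSpace ℝ (Fin n) ∂volume,
            ‖x‖ ≤ t ^ (α / β) → ‖K x‖ ≤ C * t ^ (-α) * ‖x‖ ^ (β - n)) →
          (∀ᵐ x : EuclideanSpace ℝ (Fin n) ∂volume,
            t ^ (α / β) ≤ ‖x‖ → ‖K x‖ ≤ C * t ^ α * ‖x‖ ^ (-(n : ℝ) - β)) →
          ∀ lam : ℝ, 0 < lam →
            ENNReal.ofReal lam *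
                (volume {x : EuclideanSpace ℝ (Fin n) | lam < ‖K x‖}) ^ (((n : ℝ) - β) / n)
              ≤ ENNReal.ofReal (C * C'' * t ^ (-α))) :=
  ⟨fun _ hs1 hs2 => ⟨_, strongTypeConst_pos hβ0 hs1 hs2,
      fun _ _ ht hC _ hK hnear hfar => eLpNorm_le_of_near_far hβ0 hβn ht hC hK hnear hfar hs1 hs2⟩,
    ⟨_, weakTypeConst_pos n β, fun _ _ ht hC _ _ hnear hfar _ hlam =>
      ofReal_mul_volume_lt_norm_rpow_le_of_near_far hβ0 hβn ht hC hnear hfar hlam⟩⟩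

/-- Lemma 3.2(1c): the case `β < n`.  If `K` obeys the pointwise bounds of
Lemma 3.1(1) for `β < n` (with constant `C` and time `t`), then
(a) for every real `s ∈ [1, n/(n-β))`, `‖K‖_{L^s} ≤ C C' t^{-(αn/β)(1-1/s)}`
with `C'` depending only on `n, α, β, s`, and
(b) `K` lies in weak `L^{n/(n-β)}` with `λ · vol{|K| > λ}^{(n-β)/n} ≤ C C'' t^{-α}`,
with `C''` depending only on `n, α, β`. -/
theorem Ls_estimate_S_beta_lt_n
    (n : ℕ) (hn : 1 ≤ n) (α β : ℝ) (hα0 : 0 < α) (hα1 : α < 1)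
    (hβ0 : 0 < β) (hβn : β < n) :
    (∀ s : ℝ, 1 ≤ s → s < n / ((n : ℝ) - β) →
      ∃ C' : ℝ, 0 < C' ∧
        ∀ (t C : ℝ), 0 < t → 0 < C →
          ∀ K : EuclideanSpace ℝ (Fin n) → ℂ, Measurable K →
            (∀ᵐ x : EuclideanSpace ℝ (Fin n) ∂volume,
              ‖x‖ ≤ t ^ (α / β) → ‖K x‖ ≤ C * t ^ (-α) * ‖x‖ ^ (β - n)) →
            (∀ᵐ x : EuclideanSpace ℝ (Fin n) ∂volume,
              t ^ (α / β) ≤ ‖x‖ → ‖K x‖ ≤ C * t ^ α * ‖x‖ ^ (-(n : ℝ) - β)) →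
            eLpNorm K (ENNReal.ofReal s) volume
              ≤ ENNReal.ofReal (C * C' * t ^ (-(α * n / β) * (1 - 1 / s)))) ∧
    (∃ C'' : ℝ, 0 < C'' ∧
      ∀ (t C : ℝ), 0 < t → 0 < C →
        ∀ K : EuclideanSpace ℝ (Fin n) → ℂ, Measurable K →
          (∀ᵐ x : EuclideanSpace ℝ (Fin n) ∂volume,
            ‖x‖ ≤ t ^ (α / β) → ‖K x‖ ≤ C * t ^ (-α) * ‖x‖ ^ (β - n)) →
          (∀ᵐ x : EuclideanSpace ℝ (Fin n) ∂volume,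
            t ^ (α / β) ≤ ‖x‖ → ‖K x‖ ≤ C * t ^ α * ‖x‖ ^ (-(n : ℝ) - β)) →
          ∀ lam : ℝ, 0 < lam →
            ENNReal.ofReal lam *
                (volume {x : EuclideanSpace ℝ (Fin n) | lam < ‖K x‖}) ^ (((n : ℝ) - β) / n)
              ≤ ENNReal.ofReal (C * C'' * t ^ (-α))) :=
  Ls_estimate_S_beta_lt_n_general n α β hβ0 hβn
end

section
/- Let n ≥ 1 be an integer, α ∈ (0,1), β > n/2 reals, t > 0 and C > 0. Let K : ℝⁿ → ℂ be measurable and suppose |K(x)| ≤ C·t^{α−1−αn/β} for almost every x with |x| ≤ t^{α/β}, and |K(x)| ≤ C·t^{2α−1}·|x|^{−n−β} for almost every x with |x| ≥ t^{α/β}. Then for every s ∈ [1,∞] there is a constant C′ depending only on n, α, β, s such that ‖K‖_{L^s(ℝⁿ)} ≤ C·C′·t^{α−1−(αn/β)(1−1/s)}. -/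
/-! With `R = t^{α/β}` and `A = α - 1 - αn/β`, the two pointwise bounds combine into
`|K x| ≤ 2^{n+β} C t^A φ(x / R)` for the profile `φ y = (1 + |y|)^{-(n+β)}`, because
`t^{2α-1} = t^A R^{n+β}`. Since `(n+β)s > n`, `φ ∈ L^s`, and dilating by `R` multiplies
the `L^s` norm by `R^{n/s} = t^{αn/(βs)}`. -/

open MeasureTheory Set ENNReal Module

theorem one_le_two_rpow_mul_one_add_rpow_neg {a q : ℝ} (ha₀ : 0 ≤ a) (ha₁ : a ≤ 1) (hq : 0 ≤ q) :
    1 ≤ 2 ^ q * (1 + a) ^ (-q) := by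
  rw [Real.rpow_neg (by positivity), le_mul_inv_iff₀ (by positivity), one_mul]
  exact Real.rpow_le_rpow (by positivity) (by linarith) hq

theorem rpow_neg_le_two_rpow_mul_one_add_rpow_neg {a q : ℝ} (ha : 1 ≤ a) (hq : 0 ≤ q) :
    a ^ (-q) ≤ 2 ^ q * (1 + a) ^ (-q) :=
  calc a ^ (-q) = 2 ^ q * (2 * a) ^ (-q) := by
        rw [Real.mul_rpow (by norm_num) (by linarith), ← mul_assoc, ← Real.rpow_add (by norm_num),
          add_neg_cancel, Real.rpow_zero, one_mul]
    _ ≤ 2 ^ q * (1 + a) ^ (-q) := mul_le_mul_of_nonneg_left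
        (Real.rpow_le_rpow_of_nonpos (by positivity) (by linarith) (by linarith)) (by positivity)

section

variable {E : Type*} [NormedAddCommGroup E]

theorem eLpNorm_one_add_norm_rpow_neg_ne_zero [MeasurableSpace E] [OpensMeasurableSpace E]
    (μ : Measure E) [NeZero μ] (r : ℝ) {p : ℝ≥0∞} (hp : p ≠ 0) :
    eLpNorm (fun x : E => (1 + ‖x‖) ^ (-r)) p μ ≠ 0 := by
  rw [Ne, eLpNorm_eq_zero_iff
    (by fun_prop : Measurable fun x : E => (1 + ‖x‖) ^ (-r)).aestronglyMeasurable hp]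
  intro h
  obtain ⟨x, hx⟩ := h.exists
  exact (Real.rpow_pos_of_pos (by positivity : (0 : ℝ) < 1 + ‖x‖) (-r)).ne' hx

variable [NormedSpace ℝ E]

theorem ae_norm_le_mul_one_add_norm_inv_smul_rpow_neg {F : Type*} [NormedAddCommGroup F]
    [MeasurableSpace E] {μ : Measure E} {K : E → F} {R q M : ℝ} (hR : 0 < R) (hq : 0 ≤ q)
    (hM : 0 ≤ M) (hnear : ∀ᵐ x ∂μ, ‖x‖ ≤ R → ‖K x‖ ≤ M)
    (hfar : ∀ᵐ x ∂μ, R ≤ ‖x‖ → ‖K x‖ ≤ M * R ^ q * ‖x‖ ^ (-q)) :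
    ∀ᵐ x ∂μ, ‖K x‖ ≤ 2 ^ q * M * ‖(1 + ‖R⁻¹ • x‖) ^ (-q)‖ := by
  filter_upwards [hnear, hfar] with x hx_near hx_far
  have hnorm : ‖R⁻¹ • x‖ = ‖x‖ / R := by
    rw [norm_smul, norm_inv, Real.norm_of_nonneg hR.le, inv_mul_eq_div]
  rw [Real.norm_of_nonneg (by positivity), mul_comm (2 ^ q) M, mul_assoc, hnorm]
  rcases le_total ‖x‖ R with hle | hge
  · refine (hx_near hle).trans (le_mul_of_one_le_right hM ?_)
    exact one_le_two_rpow_mul_one_add_rpow_neg (by positivity) ((div_le_one hR).2 hle) hq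
  · calc ‖K x‖ ≤ M * (‖x‖ / R) ^ (-q) := by
          rw [Real.div_rpow (norm_nonneg _) hR.le, Real.rpow_neg hR.le, div_inv_eq_mul,
            mul_comm _ (R ^ q), ← mul_assoc]
          exact hx_far hge
      _ ≤ M * (2 ^ q * (1 + ‖x‖ / R) ^ (-q)) := by
          gcongr
          exact rpow_neg_le_two_rpow_mul_one_add_rpow_neg ((one_le_div hR).2 hge) hq

variable [FiniteDimensional ℝ E] [MeasurableSpace E] [BorelSpace E]
  (μ : Measure E) [μ.IsAddHaarMeasure]

theorem eLpNorm_comp_inv_smul {F : Type*} [NormedAddCommGroup F] {g : E → F}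
    (hg : AEStronglyMeasurable g μ) {R : ℝ} (hR : 0 < R) (p : ℝ≥0∞) :
    eLpNorm (fun x => g (R⁻¹ • x)) p μ
      = ENNReal.ofReal (R ^ finrank ℝ E) ^ (1 / p).toReal * eLpNorm g p μ := by
  have hmap := Measure.map_addHaar_smul μ (inv_ne_zero hR.ne')
  rw [inv_pow, inv_inv, abs_of_pos (by positivity)] at hmap
  have hc : ENNReal.ofReal (R ^ finrank ℝ E) ≠ 0 := by simp; positivity
  rw [← smul_eq_mul, ← eLpNorm_smul_measure_of_ne_zero hc, ← hmap,
    eLpNorm_map_measure (hmap ▸ hg.smul_measure _) (measurable_const_smul _).aemeasurable]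
  rfl

theorem memLp_one_add_norm_rpow_neg {r : ℝ} (hnr : (finrank ℝ E : ℝ) < r) {p : ℝ≥0∞}
    (hp : 1 ≤ p) : MemLp (fun x : E => (1 + ‖x‖) ^ (-r)) p μ := by
  have hr : 0 ≤ r := (Nat.cast_nonneg _).trans hnr.le
  have hmeas : AEStronglyMeasurable (fun x : E => (1 + ‖x‖) ^ (-r)) μ :=
    (by fun_prop : Measurable fun x : E => (1 + ‖x‖) ^ (-r)).aestronglyMeasurable
  rcases eq_or_ne p ∞ with rfl | hp_top
  · refine memLp_top_of_bound hmeas 1 (ae_of_all _ fun x => ?_)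
    rw [Real.norm_of_nonneg (by positivity)]
    exact Real.rpow_le_one_of_one_le_of_nonpos (by simp) (by linarith)
  have hp₁ : 1 ≤ p.toReal := by simpa using ENNReal.toReal_mono hp_top hp
  refine (integrable_norm_rpow_iff hmeas (zero_lt_one.trans_le hp).ne' hp_top).1 ?_
  refine (integrable_one_add_norm (r := r * p.toReal) ?_).congr (ae_of_all _ fun x => ?_)
  · nlinarith
  · simp only
    rw [Real.norm_of_nonneg (by positivity), ← Real.rpow_mul (by positivity), neg_mul]

theorem eLpNorm_le_of_ae_norm_le_mul_one_add_norm_inv_smul_rpow_neg {F : Type*}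
    [NormedAddCommGroup F] {K : E → F} {p : ℝ≥0∞} {R M q : ℝ} (hR : 0 < R) (hM : 0 ≤ M)
    (hprofile : MemLp (fun x : E => (1 + ‖x‖) ^ (-q)) p μ)
    (hK : ∀ᵐ x ∂μ, ‖K x‖ ≤ M * ‖(1 + ‖R⁻¹ • x‖) ^ (-q)‖) :
    eLpNorm K p μ ≤ ENNReal.ofReal (M * (R ^ finrank ℝ E) ^ (1 / p).toReal *
      (eLpNorm (fun x : E => (1 + ‖x‖) ^ (-q)) p μ).toReal) := by
  calc eLpNorm K p μ ≤ ENNReal.ofReal M * eLpNorm (fun x => (1 + ‖R⁻¹ • x‖) ^ (-q)) p μ :=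
        eLpNorm_le_mul_eLpNorm_of_ae_le_mul hK p
    _ = _ := by
        rw [eLpNorm_comp_inv_smul μ hprofile.aestronglyMeasurable hR,
          ENNReal.ofReal_rpow_of_nonneg (by positivity) ENNReal.toReal_nonneg,
          ENNReal.ofReal_mul (by positivity), ENNReal.ofReal_mul hM,
          ENNReal.ofReal_toReal hprofile.eLpNorm_ne_top, mul_assoc]

end

theorem Ls_estimate_P_beta_gt_half_n_general
    (n : ℕ) (α β : ℝ) (hβ : (n : ℝ) / 2 < β)
    (s : ℝ≥0∞) (hs : 1 ≤ s) :
    ∃ C' : ℝ, 0 < C' ∧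
      ∀ (t C : ℝ), 0 < t → 0 < C →
        ∀ K : EuclideanSpace ℝ (Fin n) → ℂ, Measurable K →
          (∀ᵐ x : EuclideanSpace ℝ (Fin n) ∂volume,
            ‖x‖ ≤ t ^ (α / β) → ‖K x‖ ≤ C * t ^ (α - 1 - α * n / β)) →
          (∀ᵐ x : EuclideanSpace ℝ (Fin n) ∂volume,
            t ^ (α / β) ≤ ‖x‖ → ‖K x‖ ≤ C * t ^ (2 * α - 1) * ‖x‖ ^ (-(n : ℝ) - β)) →
          eLpNorm K s volume
            ≤ ENNReal.ofReal
                (C * C' * t ^ (α - 1 - (α * n / β) * (1 - (1 / s).toReal))) := by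
  have hβ₀ : 0 < β := (by positivity : (0 : ℝ) ≤ n / 2).trans_lt hβ
  set q : ℝ := n + β
  set N := (eLpNorm (fun x : EuclideanSpace ℝ (Fin n) => (1 + ‖x‖) ^ (-q)) s volume).toReal
  have hprofile := memLp_one_add_norm_rpow_neg (E := EuclideanSpace ℝ (Fin n)) (r := q)
    volume (by simpa [q]) hs
  refine ⟨2 ^ q * N, mul_pos (by positivity) (ENNReal.toReal_pos
    (eLpNorm_one_add_norm_rpow_neg_ne_zero volume q (zero_lt_one.trans_le hs).ne')
    hprofile.eLpNorm_ne_top), fun t C ht hC K _ hnear hfar => ?_⟩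
  set R := t ^ (α / β)
  set A := α - 1 - α * n / β
  have hR : 0 < R := by positivity
  have hfar_rescaled : ∀ᵐ x : EuclideanSpace ℝ (Fin n) ∂volume,
      R ≤ ‖x‖ → ‖K x‖ ≤ C * t ^ A * R ^ q * ‖x‖ ^ (-q) := by
    have hpow : t ^ (2 * α - 1) = t ^ A * R ^ q := by
      rw [← Real.rpow_mul ht.le, ← Real.rpow_add ht]
      congr 1
      simp only [A, q]
      field_simp
      ring
    simpa only [mul_assoc C, ← hpow, q, neg_add'] using hfar
  have htime : t ^ A * (R ^ n) ^ (1 / s).toReal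
      = t ^ (α - 1 - α * n / β * (1 - (1 / s).toReal)) := by
    rw [← Real.rpow_mul_natCast ht.le, ← Real.rpow_mul ht.le, ← Real.rpow_add ht]
    congr 1
    ring
  calc eLpNorm K s volume
      ≤ ENNReal.ofReal (2 ^ q * (C * t ^ A) * (R ^ n) ^ (1 / s).toReal * N) := by
        simpa only [finrank_euclideanSpace_fin] using
          eLpNorm_le_of_ae_norm_le_mul_one_add_norm_inv_smul_rpow_neg volume hR (by positivity)
            hprofile (ae_norm_le_mul_one_add_norm_inv_smul_rpow_neg hR (by positivity)
              (by positivity) hnear hfar_rescaled)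
    _ = _ := by
        rw [← htime]
        congr 1
        ring

/-- Lemma 3.2(2a): if `β > n/2` and `K` obeys the pointwise bounds of Lemma 3.1(2)
(with constant `C` and time `t`), then for every `s ∈ [1,∞]` (as an extended real),
`‖K‖_{L^s} ≤ C C' t^{α-1-(αn/β)(1-1/s)}` with `C'` depending only on `n, α, β, s`. -/
theorem Ls_estimate_P_beta_gt_half_n
    (n : ℕ) (hn : 1 ≤ n) (α β : ℝ) (hα0 : 0 < α) (hα1 : α < 1) (hβ : (n : ℝ) / 2 < β)
    (s : ℝ≥0∞) (hs : 1 ≤ s) :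
    ∃ C' : ℝ, 0 < C' ∧
      ∀ (t C : ℝ), 0 < t → 0 < C →
        ∀ K : EuclideanSpace ℝ (Fin n) → ℂ, Measurable K →
          (∀ᵐ x : EuclideanSpace ℝ (Fin n) ∂volume,
            ‖x‖ ≤ t ^ (α / β) → ‖K x‖ ≤ C * t ^ (α - 1 - α * n / β)) →
          (∀ᵐ x : EuclideanSpace ℝ (Fin n) ∂volume,
            t ^ (α / β) ≤ ‖x‖ → ‖K x‖ ≤ C * t ^ (2 * α - 1) * ‖x‖ ^ (-(n : ℝ) - β)) →
          eLpNorm K s volume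
            ≤ ENNReal.ofReal
                (C * C' * t ^ (α - 1 - (α * n / β) * (1 - (1 / s).toReal))) :=
  Ls_estimate_P_beta_gt_half_n_general n α β hβ s hs
end

section
/- Let n ≥ 1 be an integer, α ∈ (0,1), β = n/2, t > 0 and C > 0. Let K : ℝⁿ → ℂ be measurable and suppose |K(x)| ≤ C·t^{−α−1}·(|log(t^{−α}|x|^{n/2})| + 1) for almost every x with |x| ≤ t^{2α/n}, and |K(x)| ≤ C·t^{2α−1}·|x|^{−3n/2} for almost every x with |x| ≥ t^{2α/n}. Then for every s ∈ [1,∞) there is a constant C′ depending only on n, α, s such that ‖K‖_{L^s(ℝⁿ)} ≤ C·C′·t^{α−1−2α(1−1/s)}. -/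
open MeasureTheory Set ENNReal

variable {E : Type*} [NormedAddCommGroup E] [NormedSpace ℝ E]
  [MeasurableSpace E] [BorelSpace E] [FiniteDimensional ℝ E]

lemma lintegral_closedBall_rpow_neg_le (μ : Measure E) [μ.IsAddHaarMeasure]
    {a : ℝ} (ha : 0 < a) (han : a < (Module.finrank ℝ E : ℝ)) :
    ∃ κ : ℝ≥0∞, κ ≠ ∞ ∧ ∀ r : ℝ, 0 < r →
      (∫⁻ x in Metric.closedBall (0 : E) r, ENNReal.ofReal (‖x‖ ^ (-a)) ∂μ)
        ≤ κ * ENNReal.ofReal (r ^ ((Module.finrank ℝ E : ℝ) - a)) := by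
  set d : ℝ := (Module.finrank ℝ E : ℝ) with hd
  have hd0 : 0 < d := ha.trans han
  set q : ℝ := (2 : ℝ) ^ (a - d) with hq
  have hq0 : 0 < q := Real.rpow_pos_of_pos two_pos _
  have hq1 : q < 1 := Real.rpow_lt_one_of_one_lt_of_neg one_lt_two (by linarith)
  have hgeom : (1 - ENNReal.ofReal q)⁻¹ ≠ ∞ := by
    rw [ENNReal.inv_ne_top]
    simp only [ne_eq, tsub_eq_zero_iff_le, not_le]
    exact (ENNReal.ofReal_lt_one).2 hq1
  refine ⟨ENNReal.ofReal ((2 : ℝ) ^ a) * μ (Metric.ball 0 1) * (1 - ENNReal.ofReal q)⁻¹,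
    ENNReal.mul_ne_top (ENNReal.mul_ne_top ENNReal.ofReal_ne_top measure_ball_lt_top.ne) hgeom,
    fun r hr => ?_⟩
  set ρ : ℕ → ℝ := fun k => r / 2 ^ k with hρ
  have hρpos : ∀ k, 0 < ρ k := fun k => div_pos hr (by positivity)
  -- coverage
  have hcov : Metric.closedBall (0 : E) r ⊆
      {0} ∪ ⋃ k : ℕ, (Metric.closedBall (0 : E) (ρ k) \ Metric.closedBall (0 : E) (ρ (k + 1))) := by
    intro x hx
    rcases eq_or_ne x 0 with h0 | h0
    · exact Or.inl h0
    right
    rw [Metric.mem_closedBall, dist_zero_right] at hx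
    have hxpos : 0 < ‖x‖ := norm_pos_iff.2 h0
    have hex : ∃ k : ℕ, ρ (k + 1) < ‖x‖ := by
      obtain ⟨m, hm⟩ := pow_unbounded_of_one_lt (r / ‖x‖) (one_lt_two (α := ℝ))
      rw [div_lt_iff₀ hxpos] at hm
      refine ⟨m, ?_⟩
      rw [hρ]
      rw [div_lt_iff₀ (by positivity)]
      calc r < ‖x‖ * 2 ^ m := by linarith
        _ ≤ ‖x‖ * 2 ^ (m + 1) := by gcongr <;> norm_num
    refine mem_iUnion.2 ⟨Nat.find hex, ⟨?_, ?_⟩⟩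
    · rw [Metric.mem_closedBall, dist_zero_right]
      rcases Nat.eq_zero_or_pos (Nat.find hex) with h | h
      · rw [h]; simpa [hρ] using hx
      · obtain ⟨j, hj⟩ : ∃ j, Nat.find hex = j + 1 := ⟨Nat.find hex - 1, by omega⟩
        have := Nat.find_min hex (by omega : j < Nat.find hex)
        rw [hj]
        exact not_lt.1 this
    · rw [Metric.mem_closedBall, dist_zero_right, not_le]
      exact Nat.find_spec hex
  calc (∫⁻ x in Metric.closedBall (0 : E) r, ENNReal.ofReal (‖x‖ ^ (-a)) ∂μ)
      ≤ ∫⁻ x in ({0} ∪ ⋃ k : ℕ, (Metric.closedBall (0 : E) (ρ k)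
          \ Metric.closedBall (0 : E) (ρ (k + 1)))), ENNReal.ofReal (‖x‖ ^ (-a)) ∂μ :=
        lintegral_mono_set hcov
    _ ≤ (∫⁻ x in ({0} : Set E), ENNReal.ofReal (‖x‖ ^ (-a)) ∂μ)
        + ∫⁻ x in (⋃ k : ℕ, (Metric.closedBall (0 : E) (ρ k)
          \ Metric.closedBall (0 : E) (ρ (k + 1)))), ENNReal.ofReal (‖x‖ ^ (-a)) ∂μ :=
        lintegral_union_le _ _ _
    _ ≤ 0 + ∑' k : ℕ, ∫⁻ x in (Metric.closedBall (0 : E) (ρ k)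
          \ Metric.closedBall (0 : E) (ρ (k + 1))), ENNReal.ofReal (‖x‖ ^ (-a)) ∂μ := by
        gcongr
        · rw [lintegral_singleton]
          simp [Real.zero_rpow (by linarith : -a ≠ 0)]
        · exact lintegral_iUnion_le _ _
    _ = ∑' k : ℕ, ∫⁻ x in (Metric.closedBall (0 : E) (ρ k)
          \ Metric.closedBall (0 : E) (ρ (k + 1))), ENNReal.ofReal (‖x‖ ^ (-a)) ∂μ := by
        rw [zero_add]
    _ ≤ ∑' k : ℕ, ENNReal.ofReal ((2:ℝ) ^ a * r ^ (d - a)) * ENNReal.ofReal q ^ k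
          * μ (Metric.ball 0 1) := by
        refine ENNReal.tsum_le_tsum fun k => ?_
        have hstep : (∫⁻ x in (Metric.closedBall (0 : E) (ρ k)
            \ Metric.closedBall (0 : E) (ρ (k + 1))), ENNReal.ofReal (‖x‖ ^ (-a)) ∂μ)
            ≤ ENNReal.ofReal (ρ (k+1) ^ (-a)) * μ (Metric.closedBall (0 : E) (ρ k)) := by
          calc (∫⁻ x in (Metric.closedBall (0 : E) (ρ k)
              \ Metric.closedBall (0 : E) (ρ (k + 1))), ENNReal.ofReal (‖x‖ ^ (-a)) ∂μ)
              ≤ ∫⁻ _ in (Metric.closedBall (0 : E) (ρ k)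
                \ Metric.closedBall (0 : E) (ρ (k + 1))), ENNReal.ofReal (ρ (k+1) ^ (-a)) ∂μ := by
                refine setLIntegral_mono' (measurableSet_closedBall.diff measurableSet_closedBall)
                  fun x hx => ?_
                refine ENNReal.ofReal_le_ofReal ?_
                have hxlt : ρ (k+1) < ‖x‖ := by
                  have := hx.2
                  rw [Metric.mem_closedBall, dist_zero_right, not_le] at this
                  exact this
                exact Real.rpow_le_rpow_of_nonpos (hρpos (k+1)) hxlt.le (by linarith)
            _ = ENNReal.ofReal (ρ (k+1) ^ (-a)) * μ (Metric.closedBall (0 : E) (ρ k)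
                \ Metric.closedBall (0 : E) (ρ (k + 1))) := setLIntegral_const _ _
            _ ≤ ENNReal.ofReal (ρ (k+1) ^ (-a)) * μ (Metric.closedBall (0 : E) (ρ k)) := by
                gcongr
                exact diff_subset
        refine hstep.trans (le_of_eq ?_)
        rw [Measure.addHaar_closedBall μ _ (hρpos k).le]
        have key : ρ (k+1) ^ (-a) * ρ k ^ (Module.finrank ℝ E : ℕ)
            = (2:ℝ) ^ a * r ^ (d - a) * q ^ k := by
          have h2 : (0:ℝ) ≤ 2 := by norm_num
          have h2k1 : ((2:ℝ) ^ (k+1) : ℝ) = (2:ℝ) ^ ((k:ℝ)+1) := by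
            rw [← Real.rpow_natCast 2 (k+1)]; push_cast; ring_nf
          have h2k : ((2:ℝ) ^ k : ℝ) = (2:ℝ) ^ ((k:ℝ)) := by
            rw [← Real.rpow_natCast 2 k]
          have e1 : ρ (k+1) ^ (-a) = r ^ (-a) * (2:ℝ) ^ (((k:ℝ)+1) * a) := by
            rw [hρ]
            rw [Real.div_rpow hr.le (by positivity), h2k1,
              ← Real.rpow_mul h2, div_eq_mul_inv, ← Real.rpow_neg h2]
            ring_nf
          have e2 : ρ k ^ (Module.finrank ℝ E : ℕ)
              = r ^ d * (2:ℝ) ^ (-((k:ℝ) * d)) := by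
            rw [hρ, div_pow, ← Real.rpow_natCast r (Module.finrank ℝ E), ← hd,
              ← Real.rpow_natCast ((2:ℝ) ^ k) (Module.finrank ℝ E), h2k,
              ← Real.rpow_mul h2, ← hd, div_eq_mul_inv, ← Real.rpow_neg h2]
          rw [e1, e2, hq, ← Real.rpow_natCast ((2:ℝ) ^ (a - d)) k,
            ← Real.rpow_mul h2]
          rw [show r ^ (-a) * (2:ℝ) ^ (((k:ℝ)+1) * a) * (r ^ d * (2:ℝ) ^ (-((k:ℝ) * d)))
              = (r ^ (-a) * r ^ d) * ((2:ℝ) ^ (((k:ℝ)+1) * a) * (2:ℝ) ^ (-((k:ℝ) * d)))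
              from by ring,
            ← Real.rpow_add hr, ← Real.rpow_add (by norm_num : (0:ℝ) < 2),
            show (2:ℝ) ^ a * r ^ (d - a) * (2:ℝ) ^ ((a - d) * (k:ℝ))
              = r ^ (d - a) * ((2:ℝ) ^ a * (2:ℝ) ^ ((a - d) * (k:ℝ))) from by ring,
            ← Real.rpow_add (by norm_num : (0:ℝ) < 2)]
          rw [show -a + d = d - a from by ring]
          ring_nf
        calc ENNReal.ofReal (ρ (k+1) ^ (-a))
              * (ENNReal.ofReal (ρ k ^ Module.finrank ℝ E) * μ (Metric.ball 0 1))
            = ENNReal.ofReal (ρ (k+1) ^ (-a) * ρ k ^ (Module.finrank ℝ E : ℕ))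
              * μ (Metric.ball 0 1) := by
              rw [ENNReal.ofReal_mul (Real.rpow_nonneg (hρpos (k+1)).le _), mul_assoc]
          _ = ENNReal.ofReal ((2:ℝ) ^ a * r ^ (d - a) * q ^ k) * μ (Metric.ball 0 1) := by
              rw [key]
          _ = ENNReal.ofReal ((2:ℝ) ^ a * r ^ (d - a)) * ENNReal.ofReal q ^ k
              * μ (Metric.ball 0 1) := by
              rw [ENNReal.ofReal_mul (by positivity), ENNReal.ofReal_pow hq0.le]
    _ ≤ ENNReal.ofReal ((2 : ℝ) ^ a) * μ (Metric.ball 0 1) * (1 - ENNReal.ofReal q)⁻¹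
          * ENNReal.ofReal (r ^ (d - a)) := by
        rw [ENNReal.tsum_mul_right, ENNReal.tsum_mul_left, ENNReal.tsum_geometric,
          ENNReal.ofReal_mul (by positivity : (0:ℝ) ≤ (2:ℝ) ^ a)]
        ring_nf
        exact le_rfl

lemma lintegral_compl_closedBall_rpow_neg_le (μ : Measure E) [μ.IsAddHaarMeasure]
    {a : ℝ} (han : (Module.finrank ℝ E : ℝ) < a) :
    ∃ κ : ℝ≥0∞, κ ≠ ∞ ∧ ∀ r : ℝ, 0 < r →
      (∫⁻ x in (Metric.closedBall (0 : E) r)ᶜ, ENNReal.ofReal (‖x‖ ^ (-a)) ∂μ)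
        ≤ κ * ENNReal.ofReal (r ^ ((Module.finrank ℝ E : ℝ) - a)) := by
  set d : ℝ := (Module.finrank ℝ E : ℝ) with hd
  have hd0 : 0 ≤ d := Nat.cast_nonneg _
  have ha : 0 < a := lt_of_le_of_lt hd0 han
  set q : ℝ := (2 : ℝ) ^ (d - a) with hq
  have hq0 : 0 < q := Real.rpow_pos_of_pos two_pos _
  have hq1 : q < 1 := Real.rpow_lt_one_of_one_lt_of_neg one_lt_two (by linarith)
  have hgeom : (1 - ENNReal.ofReal q)⁻¹ ≠ ∞ := by
    rw [ENNReal.inv_ne_top]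
    simp only [ne_eq, tsub_eq_zero_iff_le, not_le]
    exact (ENNReal.ofReal_lt_one).2 hq1
  refine ⟨ENNReal.ofReal ((2 : ℝ) ^ d) * μ (Metric.ball 0 1) * (1 - ENNReal.ofReal q)⁻¹,
    ENNReal.mul_ne_top (ENNReal.mul_ne_top ENNReal.ofReal_ne_top measure_ball_lt_top.ne) hgeom,
    fun r hr => ?_⟩
  set ρ : ℕ → ℝ := fun k => r * 2 ^ k with hρ
  have hρpos : ∀ k, 0 < ρ k := fun k => by positivity
  have hcov : (Metric.closedBall (0 : E) r)ᶜ ⊆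
      ⋃ k : ℕ, (Metric.closedBall (0 : E) (ρ (k + 1)) \ Metric.closedBall (0 : E) (ρ k)) := by
    intro x hx
    rw [mem_compl_iff, Metric.mem_closedBall, dist_zero_right, not_le] at hx
    have hex : ∃ k : ℕ, ‖x‖ ≤ ρ (k + 1) := by
      obtain ⟨m, hm⟩ := pow_unbounded_of_one_lt (‖x‖ / r) (one_lt_two (α := ℝ))
      rw [div_lt_iff₀ hr] at hm
      refine ⟨m, ?_⟩
      rw [hρ]
      have h2m : (2:ℝ) ^ m ≤ 2 ^ (m + 1) := by
        apply pow_le_pow_right₀ one_le_two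
        omega
      calc ‖x‖ ≤ 2 ^ m * r := hm.le
        _ = r * 2 ^ m := mul_comm _ _
        _ ≤ r * 2 ^ (m + 1) := by nlinarith
    refine mem_iUnion.2 ⟨Nat.find hex, ⟨?_, ?_⟩⟩
    · rw [Metric.mem_closedBall, dist_zero_right]
      exact Nat.find_spec hex
    · rw [Metric.mem_closedBall, dist_zero_right, not_le]
      rcases Nat.eq_zero_or_pos (Nat.find hex) with h | h
      · rw [h]; simpa [hρ] using hx
      · obtain ⟨j, hj⟩ : ∃ j, Nat.find hex = j + 1 := ⟨Nat.find hex - 1, by omega⟩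
        have := Nat.find_min hex (by omega : j < Nat.find hex)
        rw [hj]
        exact not_le.1 this
  calc (∫⁻ x in (Metric.closedBall (0 : E) r)ᶜ, ENNReal.ofReal (‖x‖ ^ (-a)) ∂μ)
      ≤ ∫⁻ x in (⋃ k : ℕ, (Metric.closedBall (0 : E) (ρ (k + 1))
          \ Metric.closedBall (0 : E) (ρ k))), ENNReal.ofReal (‖x‖ ^ (-a)) ∂μ :=
        lintegral_mono_set hcov
    _ ≤ ∑' k : ℕ, ∫⁻ x in (Metric.closedBall (0 : E) (ρ (k + 1))
          \ Metric.closedBall (0 : E) (ρ k)), ENNReal.ofReal (‖x‖ ^ (-a)) ∂μ :=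
        lintegral_iUnion_le _ _
    _ ≤ ∑' k : ℕ, ENNReal.ofReal ((2:ℝ) ^ d * r ^ (d - a)) * ENNReal.ofReal q ^ k
          * μ (Metric.ball 0 1) := by
        refine ENNReal.tsum_le_tsum fun k => ?_
        have hstep : (∫⁻ x in (Metric.closedBall (0 : E) (ρ (k + 1))
            \ Metric.closedBall (0 : E) (ρ k)), ENNReal.ofReal (‖x‖ ^ (-a)) ∂μ)
            ≤ ENNReal.ofReal (ρ k ^ (-a)) * μ (Metric.closedBall (0 : E) (ρ (k + 1))) := by
          calc (∫⁻ x in (Metric.closedBall (0 : E) (ρ (k + 1))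
              \ Metric.closedBall (0 : E) (ρ k)), ENNReal.ofReal (‖x‖ ^ (-a)) ∂μ)
              ≤ ∫⁻ _ in (Metric.closedBall (0 : E) (ρ (k + 1))
                \ Metric.closedBall (0 : E) (ρ k)), ENNReal.ofReal (ρ k ^ (-a)) ∂μ := by
                refine setLIntegral_mono' (measurableSet_closedBall.diff measurableSet_closedBall)
                  fun x hx => ?_
                refine ENNReal.ofReal_le_ofReal ?_
                have hxlt : ρ k < ‖x‖ := by
                  have := hx.2
                  rw [Metric.mem_closedBall, dist_zero_right, not_le] at this
                  exact this
                exact Real.rpow_le_rpow_of_nonpos (hρpos k) hxlt.le (by linarith)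
            _ = ENNReal.ofReal (ρ k ^ (-a)) * μ (Metric.closedBall (0 : E) (ρ (k + 1))
                \ Metric.closedBall (0 : E) (ρ k)) := setLIntegral_const _ _
            _ ≤ ENNReal.ofReal (ρ k ^ (-a)) * μ (Metric.closedBall (0 : E) (ρ (k + 1))) := by
                gcongr
                exact diff_subset
        refine hstep.trans (le_of_eq ?_)
        rw [Measure.addHaar_closedBall μ _ (hρpos (k + 1)).le]
        have h2 : (0:ℝ) ≤ 2 := by norm_num
        have key : ρ k ^ (-a) * ρ (k + 1) ^ (Module.finrank ℝ E : ℕ)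
            = (2:ℝ) ^ d * r ^ (d - a) * q ^ k := by
          have h2k1 : ((2:ℝ) ^ (k+1) : ℝ) = (2:ℝ) ^ ((k:ℝ)+1) := by
            rw [← Real.rpow_natCast 2 (k+1)]; push_cast; ring_nf
          have h2k : ((2:ℝ) ^ k : ℝ) = (2:ℝ) ^ ((k:ℝ)) := by
            rw [← Real.rpow_natCast 2 k]
          have e1 : ρ k ^ (-a) = r ^ (-a) * (2:ℝ) ^ (-((k:ℝ) * a)) := by
            rw [hρ]
            rw [Real.mul_rpow hr.le (by positivity), h2k,
              ← Real.rpow_mul h2]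
            ring_nf
          have e2 : ρ (k + 1) ^ (Module.finrank ℝ E : ℕ)
              = r ^ d * (2:ℝ) ^ (((k:ℝ)+1) * d) := by
            rw [hρ, mul_pow, ← Real.rpow_natCast r (Module.finrank ℝ E), ← hd,
              ← Real.rpow_natCast ((2:ℝ) ^ (k+1)) (Module.finrank ℝ E), h2k1,
              ← Real.rpow_mul h2, ← hd]
          rw [e1, e2, hq, ← Real.rpow_natCast ((2:ℝ) ^ (d - a)) k,
            ← Real.rpow_mul h2]
          rw [show r ^ (-a) * (2:ℝ) ^ (-((k:ℝ) * a)) * (r ^ d * (2:ℝ) ^ (((k:ℝ)+1) * d))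
              = (r ^ (-a) * r ^ d) * ((2:ℝ) ^ (-((k:ℝ) * a)) * (2:ℝ) ^ (((k:ℝ)+1) * d))
              from by ring,
            ← Real.rpow_add hr, ← Real.rpow_add (by norm_num : (0:ℝ) < 2),
            show (2:ℝ) ^ d * r ^ (d - a) * (2:ℝ) ^ ((d - a) * (k:ℝ))
              = r ^ (d - a) * ((2:ℝ) ^ d * (2:ℝ) ^ ((d - a) * (k:ℝ))) from by ring,
            ← Real.rpow_add (by norm_num : (0:ℝ) < 2)]
          rw [show -a + d = d - a from by ring]
          ring_nf
        calc ENNReal.ofReal (ρ k ^ (-a))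
              * (ENNReal.ofReal (ρ (k + 1) ^ Module.finrank ℝ E) * μ (Metric.ball 0 1))
            = ENNReal.ofReal (ρ k ^ (-a) * ρ (k + 1) ^ (Module.finrank ℝ E : ℕ))
              * μ (Metric.ball 0 1) := by
              rw [ENNReal.ofReal_mul (Real.rpow_nonneg (hρpos k).le _), mul_assoc]
          _ = ENNReal.ofReal ((2:ℝ) ^ d * r ^ (d - a) * q ^ k) * μ (Metric.ball 0 1) := by
              rw [key]
          _ = ENNReal.ofReal ((2:ℝ) ^ d * r ^ (d - a)) * ENNReal.ofReal q ^ k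
              * μ (Metric.ball 0 1) := by
              rw [ENNReal.ofReal_mul (by positivity), ENNReal.ofReal_pow hq0.le]
    _ ≤ ENNReal.ofReal ((2 : ℝ) ^ d) * μ (Metric.ball 0 1) * (1 - ENNReal.ofReal q)⁻¹
          * ENNReal.ofReal (r ^ (d - a)) := by
        rw [ENNReal.tsum_mul_right, ENNReal.tsum_mul_left, ENNReal.tsum_geometric,
          ENNReal.ofReal_mul (by positivity : (0:ℝ) ≤ (2:ℝ) ^ d)]
        ring_nf
        exact le_rfl

/-- Lemma 3.2(2b) -/

theorem Ls_estimate_P_beta_eq_half_n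
    (n : ℕ) (hn : 1 ≤ n) (α : ℝ) (hα0 : 0 < α) (hα1 : α < 1)
    (s : ℝ) (hs : 1 ≤ s) :
    ∃ C' : ℝ, 0 < C' ∧
      ∀ (t C : ℝ), 0 < t → 0 < C →
        ∀ K : EuclideanSpace ℝ (Fin n) → ℂ, Measurable K →
          (∀ᵐ x : EuclideanSpace ℝ (Fin n) ∂volume,
            ‖x‖ ≤ t ^ (2 * α / n) →
              ‖K x‖ ≤ C * t ^ (-α - 1) * (|Real.log (t ^ (-α) * ‖x‖ ^ ((n : ℝ) / 2))| + 1)) →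
          (∀ᵐ x : EuclideanSpace ℝ (Fin n) ∂volume,
            t ^ (2 * α / n) ≤ ‖x‖ →
              ‖K x‖ ≤ C * t ^ (2 * α - 1) * ‖x‖ ^ (-(3 * (n : ℝ) / 2))) →
          eLpNorm K (ENNReal.ofReal s) volume
            ≤ ENNReal.ofReal (C * C' * t ^ (α - 1 - 2 * α * (1 - 1 / s))) := by
  have hn0 : (0:ℝ) < n := by exact_mod_cast hn
  have hnne : (n:ℝ) ≠ 0 := hn0.ne'
  have hs0 : (0:ℝ) < s := lt_of_lt_of_le one_pos hs
  have hsne : s ≠ 0 := hs0.ne'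
  obtain ⟨κ₁, hκ₁, hA⟩ := lintegral_closedBall_rpow_neg_le
      (volume : Measure (EuclideanSpace ℝ (Fin n)))
      (a := (n:ℝ)/2) (by positivity)
      (by rw [finrank_euclideanSpace_fin]; linarith)
  obtain ⟨κ₂, hκ₂, hB⟩ := lintegral_compl_closedBall_rpow_neg_le
      (volume : Measure (EuclideanSpace ℝ (Fin n)))
      (a := 3*(n:ℝ)/2*s) (by rw [finrank_euclideanSpace_fin]; nlinarith)
  simp only [finrank_euclideanSpace_fin] at hA hB
  set D : ℝ≥0∞ := ENNReal.ofReal ((s+1)^s) * κ₁ + κ₂ with hD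
  have hDne : D ≠ ∞ := by
    rw [hD]
    exact ENNReal.add_ne_top.2 ⟨ENNReal.mul_ne_top ENNReal.ofReal_ne_top hκ₁, hκ₂⟩
  have hDs : D ^ (1/s) ≠ ∞ := ENNReal.rpow_ne_top_of_nonneg (by positivity) hDne
  refine ⟨(D ^ (1/s)).toReal + 1, by positivity, fun t C ht hC K hK h₁ h₂ => ?_⟩
  set C' : ℝ := (D ^ (1/s)).toReal + 1 with hC'def
  have hC' : 0 < C' := by positivity
  set r : ℝ := t ^ (2 * α / (n:ℝ)) with hrdef
  have hr : 0 < r := Real.rpow_pos_of_pos ht _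
  set B := Metric.closedBall (0 : EuclideanSpace ℝ (Fin n)) r with hBdef
  set E0 : ℝ := 2*α - (1+α)*s with hE0
  have h0 : (volume : Measure (EuclideanSpace ℝ (Fin n))) {0} = 0 := by
    rw [← Metric.closedBall_zero (x := (0 : EuclideanSpace ℝ (Fin n)))]
    rw [Measure.addHaar_closedBall _ _ le_rfl, finrank_euclideanSpace_fin,
      zero_pow (by omega : n ≠ 0)]
    simp
  have h0ne : ∀ᵐ x : EuclideanSpace ℝ (Fin n) ∂volume, x ≠ 0 := by
    rw [Filter.eventually_iff, mem_ae_iff]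
    convert h0 using 2
    ext x; simp
  have hp0 : (ENNReal.ofReal s) ≠ 0 := by
    simp only [ne_eq, ENNReal.ofReal_eq_zero, not_le]; linarith
  have hpt : (ENNReal.ofReal s) ≠ ∞ := ENNReal.ofReal_ne_top
  rw [eLpNorm_eq_lintegral_rpow_enorm_toReal hp0 hpt, ENNReal.toReal_ofReal hs0.le]
  simp only [enorm_eq_nnnorm]
  rw [← lintegral_add_compl (fun x => ((‖K x‖₊ : ℝ≥0∞)) ^ s)
    (measurableSet_closedBall : MeasurableSet B)]
  -- inner estimate
  have hinner : (∫⁻ x in B, ((‖K x‖₊:ℝ≥0∞)) ^ s ∂volume)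
      ≤ ENNReal.ofReal ((s+1)^s) * κ₁ * ENNReal.ofReal (C^s * t^E0) := by
    set c₁ : ℝ := (C*(s+1))^s * t^(α - (1+α)*s) with hc₁
    have hc₁0 : 0 < c₁ := by positivity
    set M : ℝ := C * (s+1) * t ^ ((α - (1+α)*s)/s) with hM
    have hM0 : 0 < M := by positivity
    have hae : ∀ᵐ x ∂(volume : Measure (EuclideanSpace ℝ (Fin n))), x ∈ B →
        ((‖K x‖₊:ℝ≥0∞)) ^ s
          ≤ ENNReal.ofReal c₁ * ENNReal.ofReal (‖x‖ ^ (-((n:ℝ)/2))) := by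
      filter_upwards [h₁, h0ne] with x hx1 hx0 hxB
      have hxr : ‖x‖ ≤ r := by
        rw [hBdef, Metric.mem_closedBall, dist_zero_right] at hxB; exact hxB
      have hxpos : 0 < ‖x‖ := norm_pos_iff.2 hx0
      have hb := hx1 hxr
      set u : ℝ := t ^ (-α) * ‖x‖ ^ ((n:ℝ)/2) with hu
      have hu0 : 0 < u := mul_pos (Real.rpow_pos_of_pos ht _) (Real.rpow_pos_of_pos hxpos _)
      have hu1 : u ≤ 1 := by
        have h1 : ‖x‖ ^ ((n:ℝ)/2) ≤ r ^ ((n:ℝ)/2) :=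
          Real.rpow_le_rpow hxpos.le hxr (by positivity)
        have h2 : r ^ ((n:ℝ)/2) = t ^ α := by
          rw [hrdef, ← Real.rpow_mul ht.le]
          congr 1
          field_simp
        have h3 : u ≤ t ^ (-α) * t ^ α := by
          rw [hu]
          exact mul_le_mul_of_nonneg_left (h1.trans h2.le) (Real.rpow_pos_of_pos ht _).le
        calc u ≤ t ^ (-α) * t ^ α := h3
          _ = 1 := by rw [← Real.rpow_add ht]; simp
      have h1u : 1 ≤ u ^ (-(1/s)) :=
        Real.one_le_rpow_of_pos_of_le_one_of_nonpos hu0 hu1 (by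
          rw [neg_nonpos]; positivity)
      have hlog : |Real.log u| + 1 ≤ (s+1) * u ^ (-(1/s)) := by
        have hlsub : Real.log (u ^ (-(1/s))) ≤ u ^ (-(1/s)) - 1 :=
          Real.log_le_sub_one_of_pos (Real.rpow_pos_of_pos hu0 _)
        rw [Real.log_rpow hu0] at hlsub
        rw [abs_of_nonpos (Real.log_nonpos hu0.le hu1)]
        have hss : s * (1/s) = 1 := by field_simp
        have h4 : -Real.log u ≤ s * (u ^ (-(1/s)) - 1) := by
          have h5 := mul_le_mul_of_nonneg_left hlsub hs0.le
          have h6 : s * (-(1/s) * Real.log u) = -Real.log u := by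
            rw [show s * (-(1/s) * Real.log u) = -((s*(1/s)) * Real.log u) from by ring,
              hss, one_mul]
          rw [← h6]
          exact h5
        nlinarith [h4, h1u, hs]
      have hu2 : u ^ (-(1/s)) = t ^ (α/s) * ‖x‖ ^ (-((n:ℝ)/(2*s))) := by
        rw [hu, Real.mul_rpow (Real.rpow_pos_of_pos ht _).le
          (Real.rpow_pos_of_pos hxpos _).le,
          ← Real.rpow_mul ht.le, ← Real.rpow_mul (norm_nonneg x)]
        rw [show (-α)*(-(1/s)) = α/s from by ring,
          show ((n:ℝ)/2)*(-(1/s)) = -((n:ℝ)/(2*s)) from by ring]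
      have hKb : ‖K x‖ ≤ M * ‖x‖ ^ (-((n:ℝ)/(2*s))) := by
        calc ‖K x‖ ≤ C * t ^ (-α - 1) * (|Real.log u| + 1) := hb
          _ ≤ C * t ^ (-α - 1) * ((s+1) * u ^ (-(1/s))) := by
              exact mul_le_mul_of_nonneg_left hlog (by positivity)
          _ = M * ‖x‖ ^ (-((n:ℝ)/(2*s))) := by
              rw [hu2, hM, show (α - (1+α)*s)/s = -α - 1 + α/s from by field_simp; ring,
                Real.rpow_add ht (-α - 1) (α/s)]
              ring
      calc ((‖K x‖₊ : ℝ≥0∞)) ^ s = (ENNReal.ofReal ‖K x‖) ^ s := by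
            rw [ofReal_norm_eq_enorm, enorm_eq_nnnorm]
        _ ≤ (ENNReal.ofReal (M * ‖x‖ ^ (-((n:ℝ)/(2*s))))) ^ s :=
            ENNReal.rpow_le_rpow (ENNReal.ofReal_le_ofReal hKb) hs0.le
        _ = ENNReal.ofReal ((M * ‖x‖ ^ (-((n:ℝ)/(2*s)))) ^ s) :=
            ENNReal.ofReal_rpow_of_nonneg (by positivity) hs0.le
        _ = ENNReal.ofReal c₁ * ENNReal.ofReal (‖x‖ ^ (-((n:ℝ)/2))) := by
            rw [← ENNReal.ofReal_mul hc₁0.le]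
            congr 1
            rw [Real.mul_rpow hM0.le (by positivity),
              ← Real.rpow_mul (norm_nonneg x), hM, hc₁,
              Real.mul_rpow (by positivity) (by positivity),
              ← Real.rpow_mul ht.le,
              show ((α - (1+α)*s)/s)*s = α - (1+α)*s from by field_simp,
              show (-((n:ℝ)/(2*s)))*s = -((n:ℝ)/2) from by field_simp]
    calc (∫⁻ x in B, ((‖K x‖₊:ℝ≥0∞)) ^ s ∂volume)
        ≤ ∫⁻ x in B, ENNReal.ofReal c₁ * ENNReal.ofReal (‖x‖ ^ (-((n:ℝ)/2))) ∂volume :=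
          setLIntegral_mono_ae (Measurable.aemeasurable (by fun_prop)) hae
      _ = ENNReal.ofReal c₁ * ∫⁻ x in B, ENNReal.ofReal (‖x‖ ^ (-((n:ℝ)/2))) ∂volume :=
          lintegral_const_mul' _ _ ENNReal.ofReal_ne_top
      _ ≤ ENNReal.ofReal c₁ * (κ₁ * ENNReal.ofReal (r ^ ((n:ℝ) - (n:ℝ)/2))) := by
          gcongr
          exact hA r hr
      _ = ENNReal.ofReal ((s+1)^s) * κ₁ * ENNReal.ofReal (C^s * t^E0) := by
          have h2 : r ^ ((n:ℝ) - (n:ℝ)/2) = t ^ α := by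
            rw [hrdef, ← Real.rpow_mul ht.le]
            congr 1
            field_simp
            ring
          have h3 : c₁ * t^α = (s+1)^s * (C^s * t^E0) := by
            rw [hc₁, hE0, Real.mul_rpow hC.le (by positivity),
              show C^s*(s+1)^s*t^(α-(1+α)*s)*t^α
                = (s+1)^s*(C^s*(t^(α-(1+α)*s)*t^α)) from by ring,
              ← Real.rpow_add ht]
            ring_nf
          rw [h2, show ENNReal.ofReal c₁ * (κ₁ * ENNReal.ofReal (t^α))
              = κ₁ * (ENNReal.ofReal c₁ * ENNReal.ofReal (t^α)) from by ring,
            ← ENNReal.ofReal_mul hc₁0.le, h3,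
            ENNReal.ofReal_mul (by positivity : (0:ℝ) ≤ (s+1)^s)]
          ring
  -- outer estimate
  have houter : (∫⁻ x in Bᶜ, ((‖K x‖₊:ℝ≥0∞)) ^ s ∂volume)
      ≤ κ₂ * ENNReal.ofReal (C^s * t^E0) := by
    set c₂ : ℝ := C^s * t^((2*α-1)*s) with hc₂
    have hc₂0 : 0 < c₂ := by positivity
    have hae : ∀ᵐ x ∂(volume : Measure (EuclideanSpace ℝ (Fin n))), x ∈ Bᶜ →
        ((‖K x‖₊:ℝ≥0∞)) ^ s
          ≤ ENNReal.ofReal c₂ * ENNReal.ofReal (‖x‖ ^ (-(3*(n:ℝ)/2*s))) := by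
      filter_upwards [h₂] with x hx2 hxB
      have hxr : r ≤ ‖x‖ := by
        rw [hBdef, mem_compl_iff, Metric.mem_closedBall, dist_zero_right, not_le] at hxB
        exact hxB.le
      have hxpos : 0 < ‖x‖ := lt_of_lt_of_le hr hxr
      have hb := hx2 hxr
      calc ((‖K x‖₊ : ℝ≥0∞)) ^ s = (ENNReal.ofReal ‖K x‖) ^ s := by
            rw [ofReal_norm_eq_enorm, enorm_eq_nnnorm]
        _ ≤ (ENNReal.ofReal (C * t^(2*α-1) * ‖x‖ ^ (-(3*(n:ℝ)/2)))) ^ s :=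
            ENNReal.rpow_le_rpow (ENNReal.ofReal_le_ofReal hb) hs0.le
        _ = ENNReal.ofReal ((C * t^(2*α-1) * ‖x‖ ^ (-(3*(n:ℝ)/2)))^s) :=
            ENNReal.ofReal_rpow_of_nonneg (by positivity) hs0.le
        _ = ENNReal.ofReal c₂ * ENNReal.ofReal (‖x‖ ^ (-(3*(n:ℝ)/2*s))) := by
            rw [← ENNReal.ofReal_mul hc₂0.le]
            congr 1
            rw [Real.mul_rpow (by positivity) (by positivity),
              Real.mul_rpow hC.le (by positivity),
              ← Real.rpow_mul ht.le, ← Real.rpow_mul (norm_nonneg x), hc₂,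
              show (-(3*(n:ℝ)/2))*s = -(3*(n:ℝ)/2*s) from by ring]
    calc (∫⁻ x in Bᶜ, ((‖K x‖₊:ℝ≥0∞)) ^ s ∂volume)
        ≤ ∫⁻ x in Bᶜ, ENNReal.ofReal c₂ * ENNReal.ofReal (‖x‖ ^ (-(3*(n:ℝ)/2*s))) ∂volume :=
          setLIntegral_mono_ae (Measurable.aemeasurable (by fun_prop)) hae
      _ = ENNReal.ofReal c₂ * ∫⁻ x in Bᶜ,
            ENNReal.ofReal (‖x‖ ^ (-(3*(n:ℝ)/2*s))) ∂volume :=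
          lintegral_const_mul' _ _ ENNReal.ofReal_ne_top
      _ ≤ ENNReal.ofReal c₂ * (κ₂ * ENNReal.ofReal (r ^ ((n:ℝ) - 3*(n:ℝ)/2*s))) := by
          gcongr
          exact hB r hr
      _ = κ₂ * ENNReal.ofReal (C^s * t^E0) := by
          have h2 : r ^ ((n:ℝ) - 3*(n:ℝ)/2*s) = t ^ (2*α - 3*α*s) := by
            rw [hrdef, ← Real.rpow_mul ht.le]
            congr 1
            field_simp
          have h3 : c₂ * t^(2*α - 3*α*s) = C^s * t^E0 := by
            rw [hc₂, hE0, mul_assoc, ← Real.rpow_add ht]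
            ring_nf
          rw [h2, show ENNReal.ofReal c₂ * (κ₂ * ENNReal.ofReal (t^(2*α-3*α*s)))
              = κ₂ * (ENNReal.ofReal c₂ * ENNReal.ofReal (t^(2*α-3*α*s))) from by ring,
            ← ENNReal.ofReal_mul hc₂0.le, h3]
  -- combine
  have hsum : (∫⁻ x in B, ((‖K x‖₊:ℝ≥0∞)) ^ s ∂volume)
      + (∫⁻ x in Bᶜ, ((‖K x‖₊:ℝ≥0∞)) ^ s ∂volume)
      ≤ D * ENNReal.ofReal (C^s * t^E0) := by
    rw [hD, add_mul]
    exact add_le_add hinner houter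
  calc ((∫⁻ x in B, ((‖K x‖₊:ℝ≥0∞)) ^ s ∂volume)
        + (∫⁻ x in Bᶜ, ((‖K x‖₊:ℝ≥0∞)) ^ s ∂volume)) ^ (1/s)
      ≤ (D * ENNReal.ofReal (C^s * t^E0)) ^ (1/s) :=
        ENNReal.rpow_le_rpow hsum (by positivity)
    _ = D ^ (1/s) * (ENNReal.ofReal (C^s * t^E0)) ^ (1/s) :=
        ENNReal.mul_rpow_of_nonneg _ _ (by positivity)
    _ ≤ ENNReal.ofReal C' * ENNReal.ofReal ((C^s * t^E0) ^ (1/s)) := by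
        refine mul_le_mul' ?_ (le_of_eq ?_)
        · rw [← ENNReal.ofReal_toReal hDs]
          exact ENNReal.ofReal_le_ofReal (by rw [hC'def]; linarith)
        · exact ENNReal.ofReal_rpow_of_nonneg (by positivity) (by positivity)
    _ = ENNReal.ofReal (C * C' * t ^ (α - 1 - 2 * α * (1 - 1 / s))) := by
        rw [← ENNReal.ofReal_mul hC'.le]
        congr 1
        rw [Real.mul_rpow (by positivity) (by positivity),
          ← Real.rpow_mul hC.le, ← Real.rpow_mul ht.le,
          show s * (1/s) = 1 from by field_simp, Real.rpow_one,
          show E0 * (1/s) = α - 1 - 2 * α * (1 - 1 / s) from by rw [hE0]; field_simp; ring]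
        ring
end
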